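/- arXiv:2111.01704 — 3 statements merged into one kernel-verified Lean document; each statement's English description precedes it below -/
import Mathlib

section
/- Let B be a Boolean algebra, δ an ordinal, and ⟨B_α : α ≤ δ⟩ an increasing chain of Boolean subalgebras of B that is continuous at limits (for limit β ≤ δ, B_β = ⋃_{α<β} B_α) with B_δ = B. Let I be an ideal of B, and for each α < δ let J_α ⊆ B_{α+1} be independent from B_α modulo I ∩ B_{α+1} in B_{α+1}. Then ⋃_{α<δ} J_α is independent from B₀ modulo I in B. -/
/-- A subset of a Boolean algebra closed under the Boolean operations and containing `⊥`
and `⊤`. -/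
def IsBooleanSubalgebra {B : Type*} [BooleanAlgebra B] (S : Set B) : Prop :=
  ⊥ ∈ S ∧ ⊤ ∈ S ∧ (∀ a ∈ S, ∀ b ∈ S, a ⊓ b ∈ S) ∧ (∀ a ∈ S, ∀ b ∈ S, a ⊔ b ∈ S) ∧
    ∀ a ∈ S, aᶜ ∈ S

/-- The Boolean subalgebra of `B` generated by a subset `X`. -/
def genBA {B : Type*} [BooleanAlgebra B] (X : Set B) : Set B :=
  ⋂₀ {S : Set B | IsBooleanSubalgebra S ∧ X ⊆ S}

/-- An ideal of a Boolean algebra: a nonempty subset that is downward closed and closed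
under binary joins. -/
def IsIdeal {B : Type*} [BooleanAlgebra B] (I : Set B) : Prop :=
  I.Nonempty ∧ (∀ a b : B, a ≤ b → b ∈ I → a ∈ I) ∧ ∀ a ∈ I, ∀ b ∈ I, a ⊔ b ∈ I

/-- `Y` is independent from `X` modulo `I` in the Boolean algebra `B` : for all finite
disjoint subsets `F₁, F₂` of `Y` and every element `a` of the Boolean subalgebra generated
by `X` with `a ∉ I`, the element `(⨅ y ∈ F₁, y) ⊓ (⨅ y ∈ F₂, yᶜ) ⊓ a` is not in `I`. -/
def IndepFrom {B : Type*} [BooleanAlgebra B] (Y X I : Set B) : Prop :=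
  ∀ F₁ F₂ : Finset B, ↑F₁ ⊆ Y → ↑F₂ ⊆ Y → Disjoint F₁ F₂ →
    ∀ a ∈ genBA X, a ∉ I → (F₁.inf id ⊓ F₂.inf (fun y => yᶜ) ⊓ a) ∉ I

/-!
Given finitely many literals from `⋃ α < μ, J α`, let `ν < μ` be the largest stage at which
they occur. By induction on `μ`, the literals from stages below `ν` cut `a ∈ B₀ \ I` down to an
element `b ∈ B_ν \ I`; the remaining literals lie in `J ν`, and independence of `J ν` from
`B_ν` modulo `I ∩ B_{ν+1}` keeps their meet with `b` outside `I`, since that meet lies in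
`B_{ν+1}`.
-/

lemma genBA_subset {B : Type*} [BooleanAlgebra B] {X S : Set B}
    (hS : IsBooleanSubalgebra S) (hX : X ⊆ S) : genBA X ⊆ S :=
  Set.sInter_subset_of_mem ⟨hS, hX⟩

lemma subset_genBA {B : Type*} [BooleanAlgebra B] (X : Set B) : X ⊆ genBA X :=
  fun _ hx _ hS => hS.2 hx

namespace IsBooleanSubalgebra

variable {B : Type*} [BooleanAlgebra B] {S : Set B}

lemma finset_inf_mem (hS : IsBooleanSubalgebra S) {ι : Type*} {F : Finset ι} {g : ι → B}
    (hg : ∀ i ∈ F, g i ∈ S) : F.inf g ∈ S :=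
  Finset.inf_induction hS.2.1 hS.2.2.1 hg

lemma inf_inf_compl_inf_mem (hS : IsBooleanSubalgebra S) {F₁ F₂ : Finset B} (h₁ : ↑F₁ ⊆ S)
    (h₂ : ↑F₂ ⊆ S) {a : B} (ha : a ∈ S) : F₁.inf id ⊓ F₂.inf (fun y => yᶜ) ⊓ a ∈ S :=
  hS.2.2.1 _ (hS.2.2.1 _ (hS.finset_inf_mem fun _ hy => h₁ hy) _
    (hS.finset_inf_mem fun _ hy => hS.2.2.2.2 _ (h₂ hy))) _ ha

end IsBooleanSubalgebra

lemma inf_inf_compl_inf_eq_filter_not_inf_filter {B : Type*} [BooleanAlgebra B]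
    (p : B → Prop) [DecidablePred p] (F₁ F₂ : Finset B) (a : B) :
    F₁.inf id ⊓ F₂.inf (fun y => yᶜ) ⊓ a =
      (F₁.filter (¬p ·)).inf id ⊓ (F₂.filter (¬p ·)).inf (fun y => yᶜ) ⊓
        ((F₁.filter p).inf id ⊓ (F₂.filter p).inf (fun y => yᶜ) ⊓ a) := by
  classical
  conv_lhs => rw [← F₁.filter_union_filter_not_eq p, ← F₂.filter_union_filter_not_eq p]
  rw [Finset.inf_union, Finset.inf_union]
  ac_rfl

lemma Finset.exists_lt_subset_biUnion_Iic {ι α : Type*} [LinearOrder ι] {J : ι → Set α} {μ : ι}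
    {s : Finset α} (hs : s.Nonempty) (h : ↑s ⊆ ⋃ i ∈ Set.Iio μ, J i) :
    ∃ ν < μ, ↑s ⊆ ⋃ i ∈ Set.Iic ν, J i := by
  have hmem : ∀ y ∈ s, ∃ i < μ, y ∈ J i := fun y hy => by simpa using h hy
  have : Nonempty ι := ⟨μ⟩
  choose! f hfμ hfJ using hmem
  obtain ⟨y, hy, hmax⟩ := s.exists_max_image f hs
  exact ⟨f y, hfμ y hy, fun z hz => Set.mem_biUnion (hmax z hz) (hfJ z hz)⟩

lemma mem_of_mem_biUnion_Iic_of_notMem_biUnion_Iio {ι α : Type*} [LinearOrder ι]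
    {J : ι → Set α} {ν : ι} {y : α} (hle : y ∈ ⋃ i ∈ Set.Iic ν, J i)
    (hlt : y ∉ ⋃ i ∈ Set.Iio ν, J i) : y ∈ J ν := by
  obtain ⟨i, hiν, hyi⟩ := Set.mem_iUnion₂.mp hle
  obtain hiν | rfl := (Set.mem_Iic.mp hiν).lt_or_eq
  · exact absurd (Set.mem_biUnion (Set.mem_Iio.mpr hiν) hyi) hlt
  · exact hyi

section Chain

variable {B : Type*} {δ : Ordinal} {Bc J : Ordinal → Set B} {I : Set B}

lemma biUnion_Iio_subset_of_chain (hmono : ∀ α β : Ordinal, α ≤ β → β ≤ δ → Bc α ⊆ Bc β)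
    (hJsub : ∀ α < δ, J α ⊆ Bc (α + 1)) {ν : Ordinal} (hν : ν ≤ δ) :
    ⋃ α ∈ Set.Iio ν, J α ⊆ Bc ν := by
  simp only [Set.iUnion_subset_iff, Set.mem_Iio]
  exact fun α hα => (hJsub α (hα.trans_le hν)).trans
    (hmono _ _ (Order.add_one_le_iff.mpr hα) hν)

theorem indepFrom_biUnion_Iio [BooleanAlgebra B] (hsub : ∀ α ≤ δ, IsBooleanSubalgebra (Bc α))
    (hmono : ∀ α β : Ordinal, α ≤ β → β ≤ δ → Bc α ⊆ Bc β)
    (hJsub : ∀ α < δ, J α ⊆ Bc (α + 1))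
    (hJind : ∀ α < δ, IndepFrom (J α) (Bc α) (I ∩ Bc (α + 1))) (μ : Ordinal) (hμ : μ ≤ δ) :
    IndepFrom (⋃ α ∈ Set.Iio μ, J α) (Bc 0) I := by
  classical
  induction μ using WellFoundedLT.induction with | _ μ ih
  intro F₁ F₂ hF₁ hF₂ hdisj a ha haI
  rcases (F₁ ∪ F₂).eq_empty_or_nonempty with hempty | hne
  · obtain ⟨rfl, rfl⟩ := Finset.union_eq_empty.mp hempty
    simpa using haI
  obtain ⟨ν, hνμ, hF⟩ := (F₁ ∪ F₂).exists_lt_subset_biUnion_Iic hne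
    (by simpa only [Finset.coe_union, Set.union_subset_iff] using ⟨hF₁, hF₂⟩)
  have hνδ := hνμ.trans_le hμ
  set p : B → Prop := (· ∈ ⋃ α ∈ Set.Iio ν, J α)
  have hlower {F : Finset B} : ↑(F.filter p) ⊆ ⋃ α ∈ Set.Iio ν, J α :=
    fun _ hy => (Finset.mem_filter.mp hy).2
  have hlast {F : Finset B} (hsubF : F ⊆ F₁ ∪ F₂) : ↑(F.filter (¬p ·)) ⊆ J ν := fun y hy =>
    have ⟨hyF, hyp⟩ := Finset.mem_filter.mp hy
    mem_of_mem_biUnion_Iic_of_notMem_biUnion_Iio (hF (hsubF hyF)) hyp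
  set b := (F₁.filter p).inf id ⊓ (F₂.filter p).inf (fun y => yᶜ) ⊓ a
  have hbI : b ∉ I := ih ν hνμ hνδ.le _ _ hlower hlower
    (hdisj.mono (Finset.filter_subset _ _) (Finset.filter_subset _ _)) a ha haI
  have hb : b ∈ Bc ν := (hsub ν hνδ.le).inf_inf_compl_inf_mem
    (hlower.trans (biUnion_Iio_subset_of_chain hmono hJsub hνδ.le))
    (hlower.trans (biUnion_Iio_subset_of_chain hmono hJsub hνδ.le))
    (hmono 0 ν zero_le hνδ.le (genBA_subset (hsub 0 zero_le) subset_rfl ha))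
  have hν1 : ν + 1 ≤ δ := Order.add_one_le_iff.mpr hνδ
  have hind := hJind ν hνδ _ _ (hlast Finset.subset_union_left) (hlast Finset.subset_union_right)
    (hdisj.mono (Finset.filter_subset _ _) (Finset.filter_subset _ _)) b (subset_genBA _ hb)
    (fun h => hbI h.1)
  have hmem := (hsub _ hν1).inf_inf_compl_inf_mem
    ((hlast Finset.subset_union_left).trans (hJsub ν hνδ))
    ((hlast Finset.subset_union_right).trans (hJsub ν hνδ))
    (hmono ν _ le_self_add hν1 hb)
  rw [inf_inf_compl_inf_eq_filter_not_inf_filter p]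
  exact fun hI => hind ⟨hI, hmem⟩

end Chain

theorem indepFrom_iUnion_chain_general {B : Type*} [BooleanAlgebra B]
    (δ : Ordinal) (Bc : Ordinal → Set B)
    (hsub : ∀ α ≤ δ, IsBooleanSubalgebra (Bc α))
    (hmono : ∀ α β : Ordinal, α ≤ β → β ≤ δ → Bc α ⊆ Bc β)
    (I : Set B)
    (J : Ordinal → Set B)
    (hJsub : ∀ α < δ, J α ⊆ Bc (α + 1))
    (hJind : ∀ α < δ, IndepFrom (J α) (Bc α) (I ∩ Bc (α + 1))) :
    IndepFrom (⋃ α ∈ Set.Iio δ, J α) (Bc 0) I :=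
  indepFrom_biUnion_Iio hsub hmono hJsub hJind δ le_rfl

/-- Transfinite transitivity of independence along a continuous increasing chain of
Boolean subalgebras: if at each successor step `J α ⊆ B (α+1)` is independent from `B α`
modulo `I ∩ B (α+1)`, then the union of the `J α` is independent from `B 0` modulo `I`. -/
theorem indepFrom_iUnion_chain {B : Type*} [BooleanAlgebra B]
    (δ : Ordinal) (Bc : Ordinal → Set B)
    (hsub : ∀ α ≤ δ, IsBooleanSubalgebra (Bc α))
    (hmono : ∀ α β : Ordinal, α ≤ β → β ≤ δ → Bc α ⊆ Bc β)
    (hcont : ∀ β ≤ δ, Order.IsSuccLimit β → Bc β = ⋃ α ∈ Set.Iio β, Bc α)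
    (htop : Bc δ = Set.univ)
    (I : Set B) (hI : IsIdeal I)
    (J : Ordinal → Set B)
    (hJsub : ∀ α < δ, J α ⊆ Bc (α + 1))
    (hJind : ∀ α < δ, IndepFrom (J α) (Bc α) (I ∩ Bc (α + 1))) :
    IndepFrom (⋃ α ∈ Set.Iio δ, J α) (Bc 0) I :=
  indepFrom_iUnion_chain_general δ Bc hsub hmono I J hJsub hJind
end

section
/- Let B be a countable Boolean algebra with ⊥ ≠ ⊤ that is atomless (it has no atoms: for every b ≠ ⊥ there is c with ⊥ < c < b). Then for every b ∈ B with b ≠ ⊥ and b ≠ ⊤, there exists a subset J ⊆ B with b ∈ J such that J generates B as a Boolean subalgebra and J is independent modulo the trivial ideal {⊥}, i.e., J is a basis of B containing b. -/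
open Finset

lemma Finset.apply_inf_inf_erase_le {α ι : Type*} [SemilatticeInf α] [OrderTop α]
    [DecidableEq ι] (s : Finset ι) (f : ι → α) (i : ι) : f i ⊓ (s.erase i).inf f ≤ s.inf f :=
  inf_insert (f := f) ▸ inf_mono (insert_erase_subset i s)

lemma Finset.sup_inf_eq_of_pairwiseDisjoint {α ι : Type*} [DistribLattice α] [OrderBot α]
    {s : Finset ι} {m e : ι → α} (hm : (s : Set ι).PairwiseDisjoint m)
    (he : ∀ j ∈ s, e j ≤ m j) {i : ι} (hi : i ∈ s) : s.sup e ⊓ m i = e i := by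
  refine le_antisymm ?_ (le_inf (le_sup hi) (he i hi))
  rw [sup_inf_distrib_right]
  refine Finset.sup_le fun j hj => ?_
  by_cases hji : j = i
  · exact hji ▸ inf_le_left
  · exact ((hm hj hi hji).mono_left (he j hj)).eq_bot.le.trans bot_le

section IndependentSets

variable {B : Type*} [BooleanAlgebra B]

lemma genBA_eq_closure (X : Set B) : genBA X = BooleanSubalgebra.closure X := by
  let L : BooleanSubalgebra B :=
    { carrier := genBA X
      supClosed' := fun _ ha _ hb S hS => hS.1.2.2.2.1 _ (ha S hS) _ (hb S hS)
      infClosed' := fun _ ha _ hb S hS => hS.1.2.2.1 _ (ha S hS) _ (hb S hS)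
      compl_mem' := fun ha S hS => hS.1.2.2.2.2 _ (ha S hS)
      bot_mem' := fun S hS => hS.1.1 }
  set C := BooleanSubalgebra.closure X
  have hC : IsBooleanSubalgebra (C : Set B) :=
    ⟨C.bot_mem, C.top_mem, fun _ h _ h' => C.inf_mem h h', fun _ h _ h' => C.sup_mem h h',
      fun _ h => C.compl_mem h⟩
  have hXL : X ⊆ L := fun _ hx S hS => hS.2 hx
  exact subset_antisymm (fun a ha => ha _ ⟨hC, BooleanSubalgebra.subset_closure⟩)
    (BooleanSubalgebra.closure_le.2 hXL)

def IsIndependent (Y : Set B) : Prop :=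
  ∀ F₁ F₂ : Finset B, ↑F₁ ⊆ Y → ↑F₂ ⊆ Y → Disjoint F₁ F₂ → F₁.inf id ⊓ F₂.inf (fun y => yᶜ) ≠ ⊥

lemma IsIndependent.indepFrom_empty_bot {Y : Set B} (hY : IsIndependent Y) :
    IndepFrom Y ∅ {⊥} := by
  intro F₁ F₂ h₁ h₂ hdis a ha ha_ne
  have ha_top : a = ⊤ := by
    have hle : BooleanSubalgebra.closure (∅ : Set B) ≤ ⊥ :=
      BooleanSubalgebra.closure_le.2 (Set.empty_subset _)
    rw [genBA_eq_closure] at ha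
    exact (hle ha).resolve_left ha_ne
  simpa [ha_top] using hY F₁ F₂ h₁ h₂ hdis

lemma isIndependent_iUnion {ι : Type*} [Nonempty ι] {Y : ι → Set B}
    (hdir : Directed (· ⊆ ·) Y) (hY : ∀ i, IsIndependent (Y i)) :
    IsIndependent (⋃ i, Y i) := by
  classical
  intro F₁ F₂ h₁ h₂ hdis
  obtain ⟨i, hi⟩ := hdir.exists_mem_subset_of_finset_subset_biUnion
    (s := F₁ ∪ F₂) (by simpa using And.intro h₁ h₂)
  rw [coe_union, Set.union_subset_iff] at hi
  exact hY i F₁ F₂ hi.1 hi.2 hdis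

lemma isIndependent_insert {Y : Set B} {d : B}
    (hd : ∀ F₁ F₂ : Finset B, ↑F₁ ⊆ Y → ↑F₂ ⊆ Y → Disjoint F₁ F₂ →
      F₁.inf id ⊓ F₂.inf (fun y => yᶜ) ⊓ d ≠ ⊥ ∧ F₁.inf id ⊓ F₂.inf (fun y => yᶜ) ⊓ dᶜ ≠ ⊥) :
    IsIndependent (insert d Y) := by
  classical
  intro F₁ F₂ h₁ h₂ hdis
  have hY : ∀ F : Finset B, ↑F ⊆ insert d Y → ↑(F.erase d) ⊆ Y := fun F hF => by
    rwa [coe_erase, Set.sdiff_singleton_subset_iff]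
  have hsplit := hd _ _ (hY F₁ h₁) (hY F₂ h₂)
    (hdis.mono (erase_subset d F₁) (erase_subset d F₂))
  by_cases hd₂ : d ∈ F₂
  · have hd₁ : d ∉ F₁ := disjoint_right.1 hdis hd₂
    refine ne_bot_of_le_ne_bot hsplit.2 ?_
    rw [erase_eq_of_notMem hd₁, inf_assoc]
    exact inf_le_inf_left _ (inf_comm dᶜ _ ▸ apply_inf_inf_erase_le F₂ _ d)
  · refine ne_bot_of_le_ne_bot hsplit.1 ?_
    rw [erase_eq_of_notMem hd₂, inf_right_comm]
    exact inf_le_inf_right _ (inf_comm d _ ▸ apply_inf_inf_erase_le F₁ id d)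

lemma isIndependent_singleton {b : B} (hb : b ≠ ⊥) (hb' : b ≠ ⊤) : IsIndependent {b} := by
  rw [← insert_empty_eq]
  refine isIndependent_insert fun F₁ F₂ h₁ h₂ _ => ?_
  rw [Set.subset_empty_iff, coe_eq_empty] at h₁ h₂
  simpa [h₁, h₂] using ⟨hb, hb'⟩

end IndependentSets

section Minterms

variable {B : Type*} [BooleanAlgebra B] [DecidableEq B]

def minterm (J S : Finset B) : B := S.inf id ⊓ (J \ S).inf (fun y => yᶜ)

lemma minterm_le_of_mem {J S : Finset B} {j : B} (hj : j ∈ S) : minterm J S ≤ j :=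
  inf_le_left.trans (inf_le (f := id) hj)

lemma minterm_le_compl {J S : Finset B} {j : B} (hjJ : j ∈ J) (hjS : j ∉ S) :
    minterm J S ≤ jᶜ :=
  inf_le_right.trans (inf_le (f := fun y => yᶜ) (mem_sdiff.2 ⟨hjJ, hjS⟩))

lemma minterm_sdiff_le {J F₁ F₂ : Finset B} (h₁ : F₁ ⊆ J) (h₂ : F₂ ⊆ J)
    (hdis : Disjoint F₁ F₂) :
    minterm J (J \ F₂) ≤ F₁.inf id ⊓ F₂.inf (fun y => yᶜ) := by
  rw [minterm, Finset.sdiff_sdiff_eq_self h₂]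
  exact inf_le_inf_right _ (inf_mono (subset_sdiff.2 ⟨h₁, hdis⟩))

lemma IsIndependent.minterm_ne_bot {J : Finset B} (hJ : IsIndependent (J : Set B))
    {S : Finset B} (hS : S ⊆ J) : minterm J S ≠ ⊥ :=
  hJ S (J \ S) (coe_subset.2 hS) (coe_subset.2 sdiff_subset) disjoint_sdiff

lemma pairwiseDisjoint_minterm (J : Finset B) :
    (J.powerset : Set (Finset B)).PairwiseDisjoint (minterm J) := by
  intro S hS S' hS' hne
  obtain ⟨j, hj⟩ := not_forall.1 (mt ext hne)
  have hJ : ∀ {T}, T ∈ (J.powerset : Set (Finset B)) → j ∈ T → j ∈ J :=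
    fun hT hjT => mem_powerset.1 (mem_coe.1 hT) hjT
  by_cases hjS : j ∈ S
  · have hjS' : j ∉ S' := by tauto
    exact disjoint_compl_right.mono (minterm_le_of_mem hjS) (minterm_le_compl (hJ hS hjS) hjS')
  · have hjS' : j ∈ S' := by tauto
    exact disjoint_compl_left.mono (minterm_le_compl (hJ hS' hjS') hjS) (minterm_le_of_mem hjS')

lemma sup_minterm (J : Finset B) : J.powerset.sup (minterm J) = ⊤ := by
  induction J using Finset.induction_on with
  | empty => simp [minterm]
  | @insert a J ha ih =>
    have hout : ∀ S ∈ J.powerset, minterm (insert a J) S = aᶜ ⊓ minterm J S := fun S hS => by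
      have haS : a ∉ S := fun h => ha (mem_powerset.1 hS h)
      rw [minterm, insert_sdiff_of_notMem _ haS, inf_insert, minterm, inf_left_comm]
    have hin : ∀ S ∈ J.powerset, minterm (insert a J) (insert a S) = a ⊓ minterm J S :=
      fun S hS => by
        rw [minterm, insert_sdiff_insert, sdiff_insert_of_notMem ha,
          inf_insert, minterm, inf_assoc]
        rfl
    rw [powerset_insert, sup_union, sup_image, sup_congr rfl hout, Function.comp_def,
      sup_congr rfl hin, ← sup_inf_distrib_left, ← sup_inf_distrib_left, ih]
    simp

lemma minterm_mem_closure (J S : Finset B) (hS : S ⊆ J) :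
    minterm J S ∈ BooleanSubalgebra.closure (J : Set B) := by
  set C := BooleanSubalgebra.closure (J : Set B)
  have hJ : ∀ j ∈ J, j ∈ C := fun j hj => BooleanSubalgebra.subset_closure (mem_coe.2 hj)
  refine C.inf_mem (inf_mem _ C.top_mem (fun _ h _ h' => C.inf_mem h h') _ _ ?_)
    (inf_mem _ C.top_mem (fun _ h _ h' => C.inf_mem h h') _ _ ?_)
  · exact fun j hj => hJ j (hS hj)
  · exact fun j hj => C.compl_mem (hJ j (mem_sdiff.1 hj).1)

end Minterms

lemma exists_bot_lt_lt_inf_mem_of_ne_bot {B : Type*} [BooleanAlgebra B]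
    (hatomless : ∀ b : B, b ≠ ⊥ → ∃ c : B, ⊥ < c ∧ c < b) {a : B} (ha : a ≠ ⊥) (c : B) :
    ∃ e, ⊥ < e ∧ e < a ∧ c ⊓ a ∈ ({⊥, a, e} : Set B) := by
  by_cases hsplit : c ⊓ a ≠ ⊥ ∧ c ⊓ a ≠ a
  · exact ⟨c ⊓ a, bot_lt_iff_ne_bot.2 hsplit.1, lt_of_le_of_ne inf_le_right hsplit.2, by simp⟩
  · obtain ⟨e, he⟩ := hatomless a ha
    rw [not_and_or, not_not, not_not] at hsplit
    exact ⟨e, he.1, he.2, by rcases hsplit with h | h <;> simp [h]⟩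

lemma IsIndependent.exists_insert_mem_closure {B : Type*} [BooleanAlgebra B] [DecidableEq B]
    (hatomless : ∀ b : B, b ≠ ⊥ → ∃ c : B, ⊥ < c ∧ c < b) {J : Finset B}
    (hJ : IsIndependent (J : Set B)) (c : B) :
    ∃ d, IsIndependent (insert d (J : Set B)) ∧
      c ∈ BooleanSubalgebra.closure (insert d (J : Set B)) := by
  have := fun S (hS : S ∈ J.powerset) =>
    exists_bot_lt_lt_inf_mem_of_ne_bot hatomless (hJ.minterm_ne_bot (mem_powerset.1 hS)) c
  choose! e he_pos he_lt hce using this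
  set d := J.powerset.sup e
  have hd : ∀ S ∈ J.powerset, d ⊓ minterm J S = e S := fun S hS =>
    sup_inf_eq_of_pairwiseDisjoint (pairwiseDisjoint_minterm J) (fun S hS => (he_lt S hS).le) hS
  refine ⟨d, isIndependent_insert fun F₁ F₂ h₁ h₂ hdis => ?_, ?_⟩
  · rw [coe_subset] at h₁ h₂
    have hS : J \ F₂ ∈ J.powerset := mem_powerset.2 sdiff_subset
    have hle := minterm_sdiff_le h₁ h₂ hdis
    constructor
    · refine ne_bot_of_le_ne_bot (he_pos _ hS).ne' ?_
      rw [← hd _ hS, inf_comm]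
      exact inf_le_inf_right d hle
    · refine ne_bot_of_le_ne_bot (fun h => (he_lt _ hS).ne ?_) (inf_le_inf_right dᶜ hle)
      rw [← hd _ hS, inf_eq_right]
      exact disjoint_compl_right_iff.1 (disjoint_iff.2 h)
  · set C := BooleanSubalgebra.closure (insert d (J : Set B))
    have hmC : ∀ S ∈ J.powerset, minterm J S ∈ C := fun S hS =>
      BooleanSubalgebra.closure_mono (Set.subset_insert d _)
        (minterm_mem_closure J S (mem_powerset.1 hS))
    have hdC : d ∈ C := BooleanSubalgebra.subset_closure (Set.mem_insert d _)
    rw [← inf_top_eq c, ← sup_minterm J, sup_inf_distrib_left]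
    refine Finset.sup_mem _ C.bot_mem (fun _ h _ h' => C.sup_mem h h') _ _ fun S hS => ?_
    rcases hce S hS with h | h | h <;> rw [h]
    · exact C.bot_mem
    · exact hmC S hS
    · exact hd S hS ▸ C.inf_mem hdC (hmC S hS)

lemma exists_isIndependent_superset_closure_eq_top {B : Type*} [BooleanAlgebra B] [Countable B]
    (hatomless : ∀ b : B, b ≠ ⊥ → ∃ c : B, ⊥ < c ∧ c < b) {J₀ : Finset B}
    (hJ₀ : IsIndependent (J₀ : Set B)) :
    ∃ J : Set B, ↑J₀ ⊆ J ∧ IsIndependent J ∧ BooleanSubalgebra.closure J = ⊤ := by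
  classical
  obtain ⟨enum, henum⟩ := exists_surjective_nat B
  choose d hd using fun (K : {K : Finset B // IsIndependent (K : Set B)}) =>
    K.2.exists_insert_mem_closure hatomless
  let K : ℕ → {K : Finset B // IsIndependent (K : Set B)} := fun n =>
    Nat.rec ⟨J₀, hJ₀⟩ (fun n K => ⟨insert (d K (enum n)) K.1, by simpa using (hd K (enum n)).1⟩) n
  have hsucc : ∀ n, ((K (n + 1)).1 : Set B) = insert (d (K n) (enum n)) ((K n).1 : Set B) :=
    fun n => coe_insert _ _
  have hK₀ : (K 0).1 = J₀ := rfl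
  clear_value K
  have hK : Monotone fun n => ((K n).1 : Set B) :=
    monotone_nat_of_le_succ fun n => hsucc n ▸ Set.subset_insert _ _
  refine ⟨⋃ n, ((K n).1 : Set B), hK₀ ▸ Set.subset_iUnion (fun n => ((K n).1 : Set B)) 0,
    isIndependent_iUnion hK.directed_le fun n => (K n).2, ?_⟩
  refine eq_top_iff.2 fun c _ => ?_
  obtain ⟨n, rfl⟩ := henum c
  have hn : enum n ∈ BooleanSubalgebra.closure ((K (n + 1)).1 : Set B) :=
    hsucc n ▸ (hd (K n) (enum n)).2
  exact BooleanSubalgebra.closure_mono (Set.subset_iUnion (fun n => ((K n).1 : Set B)) _) hn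

theorem exists_basis_containing_general {B : Type*} [BooleanAlgebra B] [Countable B]
    (hatomless : ∀ b : B, b ≠ ⊥ → ∃ c : B, ⊥ < c ∧ c < b)
    (b : B) (hb : b ≠ ⊥) (hb' : b ≠ ⊤) :
    ∃ J : Set B, b ∈ J ∧ genBA J = Set.univ ∧ IndepFrom J ∅ {(⊥ : B)} := by
  obtain ⟨J, hbJ, hJ, hgen⟩ := exists_isIndependent_superset_closure_eq_top hatomless
    (J₀ := {b}) (by simpa using isIndependent_singleton hb hb')
  refine ⟨J, hbJ (by simp), ?_, hJ.indepFrom_empty_bot⟩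
  rw [genBA_eq_closure, hgen, BooleanSubalgebra.coe_top]

/-- In a countable atomless Boolean algebra, every element other than `⊥` and `⊤` belongs
to some basis: an independent (modulo `{⊥}`) generating set. -/
theorem exists_basis_containing {B : Type*} [BooleanAlgebra B] [Countable B]
    (hne : (⊥ : B) ≠ ⊤)
    (hatomless : ∀ b : B, b ≠ ⊥ → ∃ c : B, ⊥ < c ∧ c < b)
    (b : B) (hb : b ≠ ⊥) (hb' : b ≠ ⊤) :
    ∃ J : Set B, b ∈ J ∧ genBA J = Set.univ ∧ IndepFrom J ∅ {(⊥ : B)} :=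
  exists_basis_containing_general hatomless b hb hb'
end

section
/- Let B₂ be a countable Boolean algebra, B₁ ⊆ B₂ a Boolean subalgebra, I₂ a proper ideal of B₂ (⊤ ∉ I₂), and J₁ a countably infinite subset of B₂ that is independent from B₁ modulo I₂ in B₂. Suppose b ∈ B₂ is such that the singleton {b} is independent from B₁ modulo I₂ in B₂, and b belongs to the Boolean subalgebra of B₂ generated by J₁ ∪ I₂. Then there exists J₁' ⊆ B₂ such that b ∈ J₁', J₁' is independent from B₁ modulo I₂ in B₂, and the Boolean subalgebra of B₂ generated by J₁' ∪ I₂ equals the Boolean subalgebra generated by J₁ ∪ I₂. -/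
open symmDiff
section API
variable {B : Type*} [BooleanAlgebra B] {X Y S I : Set B}

lemma mem_genBA_iff {x : B} : x ∈ genBA X ↔ ∀ S : Set B, IsBooleanSubalgebra S → X ⊆ S → x ∈ S := by
  simp [genBA, Set.mem_sInter]

lemma subset_genBA_s8 : X ⊆ genBA X := fun x hx => mem_genBA_iff.2 fun _ _ hXS => hXS hx

lemma genBA_le (hS : IsBooleanSubalgebra S) (h : X ⊆ S) : genBA X ⊆ S :=
  fun _ hx => mem_genBA_iff.1 hx S hS h

lemma genBA_isSub (X : Set B) : IsBooleanSubalgebra (genBA X) := by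
  refine ⟨?_, ?_, ?_, ?_, ?_⟩
  · exact mem_genBA_iff.2 fun S hS _ => hS.1
  · exact mem_genBA_iff.2 fun S hS _ => hS.2.1
  · intro a ha b hb
    exact mem_genBA_iff.2 fun S hS hX =>
      hS.2.2.1 a (mem_genBA_iff.1 ha S hS hX) b (mem_genBA_iff.1 hb S hS hX)
  · intro a ha b hb
    exact mem_genBA_iff.2 fun S hS hX =>
      hS.2.2.2.1 a (mem_genBA_iff.1 ha S hS hX) b (mem_genBA_iff.1 hb S hS hX)
  · intro a ha
    exact mem_genBA_iff.2 fun S hS hX => hS.2.2.2.2 a (mem_genBA_iff.1 ha S hS hX)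

lemma genBA_mono (h : X ⊆ Y) : genBA X ⊆ genBA Y :=
  genBA_le (genBA_isSub Y) (h.trans subset_genBA_s8)

lemma bot_mem_genBA : (⊥ : B) ∈ genBA X := (genBA_isSub X).1
lemma top_mem_genBA : (⊤ : B) ∈ genBA X := (genBA_isSub X).2.1
lemma inf_mem_genBA {a b : B} (ha : a ∈ genBA X) (hb : b ∈ genBA X) : a ⊓ b ∈ genBA X :=
  (genBA_isSub X).2.2.1 a ha b hb
lemma sup_mem_genBA {a b : B} (ha : a ∈ genBA X) (hb : b ∈ genBA X) : a ⊔ b ∈ genBA X :=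
  (genBA_isSub X).2.2.2.1 a ha b hb
lemma compl_mem_genBA {a : B} (ha : a ∈ genBA X) : aᶜ ∈ genBA X :=
  (genBA_isSub X).2.2.2.2 a ha
lemma symmDiff_mem_genBA {a b : B} (ha : a ∈ genBA X) (hb : b ∈ genBA X) : a ∆ b ∈ genBA X := by
  rw [symmDiff, sdiff_eq, sdiff_eq]
  exact sup_mem_genBA (inf_mem_genBA ha (compl_mem_genBA hb))
    (inf_mem_genBA hb (compl_mem_genBA ha))

lemma finsetSup_mem_genBA {ι : Type*} (s : Finset ι) (f : ι → B)
    (h : ∀ i ∈ s, f i ∈ genBA X) : s.sup f ∈ genBA X := by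
  classical
  induction s using Finset.induction_on with
  | empty => simpa using bot_mem_genBA
  | insert a s hni ih =>
    rw [Finset.sup_insert]
    exact sup_mem_genBA (h a (Finset.mem_insert_self a s))
      (ih fun i hi => h i (Finset.mem_insert_of_mem hi))

lemma finsetInf_mem_genBA {ι : Type*} (s : Finset ι) (f : ι → B)
    (h : ∀ i ∈ s, f i ∈ genBA X) : s.inf f ∈ genBA X := by
  classical
  induction s using Finset.induction_on with
  | empty => simpa using top_mem_genBA
  | insert a s hni ih =>
    rw [Finset.inf_insert]
    exact inf_mem_genBA (h a (Finset.mem_insert_self a s))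
      (ih fun i hi => h i (Finset.mem_insert_of_mem hi))

lemma exists_finset_of_mem_genBA {x : B} (hx : x ∈ genBA X) :
    ∃ F : Finset B, ↑F ⊆ X ∧ x ∈ genBA (↑F : Set B) := by
  classical
  refine genBA_le (S := {x | ∃ F : Finset B, ↑F ⊆ X ∧ x ∈ genBA (↑F : Set B)}) ?_ ?_ hx
  · refine ⟨⟨∅, by simp, bot_mem_genBA⟩, ⟨∅, by simp, top_mem_genBA⟩, ?_, ?_, ?_⟩
    · rintro a ⟨F, hF, haF⟩ b ⟨G, hG, hbG⟩
      refine ⟨F ∪ G, by simp [hF, hG, Set.union_subset], ?_⟩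
      exact inf_mem_genBA (genBA_mono (by simp [Finset.coe_union]) haF)
        (genBA_mono (by simp [Finset.coe_union]) hbG)
    · rintro a ⟨F, hF, haF⟩ b ⟨G, hG, hbG⟩
      refine ⟨F ∪ G, by simp [hF, hG, Set.union_subset], ?_⟩
      exact sup_mem_genBA (genBA_mono (by simp [Finset.coe_union]) haF)
        (genBA_mono (by simp [Finset.coe_union]) hbG)
    · rintro a ⟨F, hF, haF⟩
      exact ⟨F, hF, compl_mem_genBA haF⟩
  · intro z hz
    exact ⟨{z}, by simpa using hz, subset_genBA_s8 (by simp)⟩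

-- Ideal lemmas
lemma IsIdeal.bot_mem (hI : IsIdeal I) : (⊥ : B) ∈ I := by
  obtain ⟨a, ha⟩ := hI.1
  exact hI.2.1 ⊥ a bot_le ha

lemma IsIdeal.mem_of_symmDiff_mem (hI : IsIdeal I) {u v : B}
    (h : u ∆ v ∈ I) (hu : u ∈ I) : v ∈ I := by
  have hv : v ≤ u ∆ v ⊔ u := le_symmDiff_sup_left u v
  exact hI.2.1 v _ hv (hI.2.2 _ h _ hu)

lemma IsIdeal.not_mem_of_symmDiff_mem (hI : IsIdeal I) {u v : B}
    (h : u ∆ v ∈ I) (hu : u ∉ I) : v ∉ I := fun hv =>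
  hu (hI.mem_of_symmDiff_mem (symmDiff_comm u v ▸ h) hv)


lemma inf_symmDiff_inf_le' (a b x y : B) : (a ⊓ b) ∆ (x ⊓ y) ≤ a ∆ x ⊔ b ∆ y := by
  have key : ∀ u v p q c d : B, u ≤ p ⊔ c → v ≤ q ⊔ d → u ⊓ v ≤ p ⊓ q ⊔ (c ⊔ d) := by
    intro u v p q c d hu hv
    calc u ⊓ v ≤ (p ⊔ c) ⊓ (q ⊔ d) := inf_le_inf hu hv
      _ ≤ p ⊓ q ⊔ (c ⊔ d) := by
          rw [inf_sup_left]
          refine sup_le ?_ (le_sup_of_le_right (le_sup_of_le_right inf_le_right))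
          rw [inf_sup_right]
          exact sup_le le_sup_left (le_sup_of_le_right (le_sup_of_le_left inf_le_left))
  rw [symmDiff_le_iff]
  constructor
  · refine key a b x y _ _ ?_ ?_
    · rw [sup_comm]; exact le_symmDiff_sup_right a x
    · rw [sup_comm]; exact le_symmDiff_sup_right b y
  · refine key x y a b _ _ ?_ ?_
    · rw [sup_comm]; exact le_symmDiff_sup_left a x
    · rw [sup_comm]; exact le_symmDiff_sup_left b y

lemma sup_symmDiff_sup_le' (a b x y : B) : (a ⊔ b) ∆ (x ⊔ y) ≤ a ∆ x ⊔ b ∆ y := by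
  have : (a ⊔ b) ∆ (x ⊔ y) = (aᶜ ⊓ bᶜ) ∆ (xᶜ ⊓ yᶜ) := by
    rw [← compl_sup, ← compl_sup, compl_symmDiff_compl]
  rw [this]
  calc (aᶜ ⊓ bᶜ) ∆ (xᶜ ⊓ yᶜ) ≤ aᶜ ∆ xᶜ ⊔ bᶜ ∆ yᶜ := inf_symmDiff_inf_le' _ _ _ _
    _ = a ∆ x ⊔ b ∆ y := by rw [compl_symmDiff_compl, compl_symmDiff_compl]

/-- characterization of `genBA (X ∪ I)` for an ideal `I`. -/
lemma mem_genBA_union_ideal (hI : IsIdeal I) {c : B} :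
    c ∈ genBA (X ∪ I) ↔ ∃ x ∈ genBA X, c ∆ x ∈ I := by
  constructor
  · intro hc
    refine genBA_le (S := {c | ∃ x ∈ genBA X, c ∆ x ∈ I}) ?_ ?_ hc
    · refine ⟨⟨⊥, bot_mem_genBA, by simpa using hI.bot_mem⟩,
        ⟨⊤, top_mem_genBA, by simpa using hI.bot_mem⟩, ?_, ?_, ?_⟩
      · rintro a ⟨x, hx, hax⟩ b ⟨y, hy, hby⟩
        exact ⟨x ⊓ y, inf_mem_genBA hx hy,
          hI.2.1 _ _ (inf_symmDiff_inf_le' a b x y) (hI.2.2 _ hax _ hby)⟩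
      · rintro a ⟨x, hx, hax⟩ b ⟨y, hy, hby⟩
        exact ⟨x ⊔ y, sup_mem_genBA hx hy,
          hI.2.1 _ _ (sup_symmDiff_sup_le' a b x y) (hI.2.2 _ hax _ hby)⟩
      · rintro a ⟨x, hx, hax⟩
        exact ⟨xᶜ, compl_mem_genBA hx, by rwa [compl_symmDiff_compl]⟩
    · rintro z (hz | hz)
      · exact ⟨z, subset_genBA_s8 hz, by simpa using hI.bot_mem⟩
      · exact ⟨⊥, bot_mem_genBA, by simpa using hz⟩
  · rintro ⟨x, hx, hcx⟩
    have h1 : x ∈ genBA (X ∪ I) := genBA_mono Set.subset_union_left hx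
    have h2 : c ∆ x ∈ genBA (X ∪ I) := genBA_mono Set.subset_union_right (subset_genBA_s8 hcx)
    have : x ∆ (c ∆ x) = c := by rw [symmDiff_comm c x, symmDiff_symmDiff_cancel_left]
    rw [← this]
    exact symmDiff_mem_genBA h1 h2

end API

section Atoms
variable {B : Type*} [BooleanAlgebra B]

/-- The atom of the finite subalgebra generated by `g i`, `i ∈ u`, with positive set `S`. -/
def atm (g : ℕ → B) (u S : Finset ℕ) : B := u.inf (fun i => if i ∈ S then g i else (g i)ᶜ)

variable (g : ℕ → B)

lemma atm_congr {u S S' : Finset ℕ} (h : ∀ i ∈ u, (i ∈ S ↔ i ∈ S')) :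
    atm g u S = atm g u S' := by
  refine Finset.inf_congr rfl fun i hi => ?_
  simp only [h i hi]

lemma atm_insert {a : ℕ} {u S : Finset ℕ} (ha : a ∉ u) :
    atm g (insert a u) S = (if a ∈ S then g a else (g a)ᶜ) ⊓ atm g u S := by
  rw [atm, Finset.inf_insert]; rfl

lemma atm_partition (u : Finset ℕ) : u.powerset.sup (atm g u) = ⊤ := by
  classical
  induction u using Finset.induction_on with
  | empty => simp [atm]
  | insert a u ha ih =>
    rw [Finset.powerset_insert, Finset.sup_union, Finset.sup_image]
    have h1 : u.powerset.sup (atm g (insert a u)) = (g a)ᶜ ⊓ ⊤ := by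
      rw [← ih, Finset.sup_inf_distrib_left]
      refine Finset.sup_congr rfl fun S hS => ?_
      rw [atm_insert g ha, if_neg]
      intro haS
      exact ha (Finset.mem_powerset.1 hS haS)
    have h2 : u.powerset.sup ((atm g (insert a u)) ∘ (insert a)) = g a ⊓ ⊤ := by
      rw [← ih, Finset.sup_inf_distrib_left]
      refine Finset.sup_congr rfl fun S hS => ?_
      simp only [Function.comp_apply]
      rw [atm_insert g ha, if_pos (Finset.mem_insert_self a S)]
      congr 1
      refine atm_congr g fun i hi => ?_
      simp only [Finset.mem_insert]
      have : i ≠ a := fun h => ha (h ▸ hi)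
      tauto
    rw [h1, h2, inf_top_eq, inf_top_eq, compl_sup_eq_top]

lemma atm_disjoint {u S S' : Finset ℕ} (hS : S ∈ u.powerset) (hS' : S' ∈ u.powerset)
    (hne : S ≠ S') : atm g u S ⊓ atm g u S' = ⊥ := by
  have : ∃ i, (i ∈ S ∧ i ∉ S') ∨ (i ∉ S ∧ i ∈ S') := by
    by_contra hc
    push_neg at hc
    exact hne (Finset.ext fun i => by
      have := hc i
      tauto)
  obtain ⟨i, hi | hi⟩ := this
  · have hiu : i ∈ u := Finset.mem_powerset.1 hS hi.1
    have h1 : atm g u S ≤ g i := by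
      have := Finset.inf_le (f := fun i => if i ∈ S then g i else (g i)ᶜ) hiu
      simp only [if_pos hi.1] at this; exact this
    have h2 : atm g u S' ≤ (g i)ᶜ := by
      have := Finset.inf_le (f := fun i => if i ∈ S' then g i else (g i)ᶜ) hiu
      simp only [if_neg hi.2] at this; exact this
    have := inf_le_inf h1 h2
    simpa using le_bot_iff.1 (this.trans_eq (inf_compl_eq_bot))
  · have hiu : i ∈ u := Finset.mem_powerset.1 hS' hi.2
    have h1 : atm g u S ≤ (g i)ᶜ := by
      have := Finset.inf_le (f := fun i => if i ∈ S then g i else (g i)ᶜ) hiu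
      simp only [if_neg hi.1] at this; exact this
    have h2 : atm g u S' ≤ g i := by
      have := Finset.inf_le (f := fun i => if i ∈ S' then g i else (g i)ᶜ) hiu
      simp only [if_pos hi.2] at this; exact this
    have := inf_le_inf h1 h2
    simpa using le_bot_iff.1 (this.trans_eq (compl_inf_eq_bot))

lemma atm_sup_compl {u : Finset ℕ} {𝒮 : Finset (Finset ℕ)} (h𝒮 : 𝒮 ⊆ u.powerset) :
    (𝒮.sup (atm g u))ᶜ = (u.powerset \ 𝒮).sup (atm g u) := by
  refine IsCompl.eq_compl ⟨?_, ?_⟩ |>.symm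
  · rw [Finset.disjoint_sup_left]
    intro S hS
    rw [Finset.disjoint_sup_right]
    intro S' hS'
    rw [disjoint_iff]
    have hmem := Finset.mem_sdiff.1 hS
    exact atm_disjoint g hmem.1 (h𝒮 hS') (fun h => hmem.2 (h ▸ hS'))
  · rw [codisjoint_iff, ← Finset.sup_union, Finset.sdiff_union_of_subset h𝒮, atm_partition]

lemma atm_recover {u : Finset ℕ} {i : ℕ} (hi : i ∈ u) :
    (u.powerset.filter (fun S => i ∈ S)).sup (atm g u) = g i := by
  classical
  apply le_antisymm
  · refine Finset.sup_le fun S hS => ?_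
    have hiS := (Finset.mem_filter.1 hS).2
    have := Finset.inf_le (f := fun j => if j ∈ S then g j else (g j)ᶜ) hi
    simp only [if_pos hiS] at this; exact this
  · calc g i = g i ⊓ u.powerset.sup (atm g u) := by rw [atm_partition, inf_top_eq]
      _ = u.powerset.sup (fun S => g i ⊓ atm g u S) := Finset.sup_inf_distrib_left _ _ _
      _ ≤ (u.powerset.filter (fun S => i ∈ S)).sup (atm g u) := by
          refine Finset.sup_le fun S hS => ?_
          by_cases hiS : i ∈ S
          · exact inf_le_right.trans (Finset.le_sup (Finset.mem_filter.2 ⟨hS, hiS⟩))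
          · have : atm g u S ≤ (g i)ᶜ := by
              have := Finset.inf_le (f := fun j => if j ∈ S then g j else (g j)ᶜ) hi
              simp only [if_neg hiS] at this; exact this
            have : g i ⊓ atm g u S ≤ g i ⊓ (g i)ᶜ := inf_le_inf le_rfl this
            exact le_trans (this.trans_eq inf_compl_eq_bot) bot_le

lemma atm_sup_inf_sup {u : Finset ℕ} {𝒮 𝒯 : Finset (Finset ℕ)}
    (h𝒮 : 𝒮 ⊆ u.powerset) (h𝒯 : 𝒯 ⊆ u.powerset) :
    𝒮.sup (atm g u) ⊓ 𝒯.sup (atm g u) = (𝒮 ∩ 𝒯).sup (atm g u) := by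
  classical
  apply le_antisymm
  · rw [Finset.sup_inf_distrib_right]
    refine Finset.sup_le fun S hS => ?_
    rw [Finset.sup_inf_distrib_left]
    refine Finset.sup_le fun T hT => ?_
    by_cases h : S = T
    · subst h
      exact inf_le_left.trans (Finset.le_sup (Finset.mem_inter.2 ⟨hS, hT⟩))
    · exact (inf_le_inf (le_refl _) (le_refl _)).trans_eq (atm_disjoint g (h𝒮 hS) (h𝒯 hT) h) |>.trans bot_le
  · refine Finset.sup_le fun S hS => ?_
    have := Finset.mem_inter.1 hS
    exact le_inf (Finset.le_sup this.1) (Finset.le_sup this.2)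

/-- Normal form: every element of the subalgebra generated by `g '' u` is a union of atoms. -/
lemma exists_atoms_of_mem_genBA [DecidableEq B] {u : Finset ℕ} {x : B}
    (hx : x ∈ genBA (↑(u.image g) : Set B)) :
    ∃ 𝒮 : Finset (Finset ℕ), 𝒮 ⊆ u.powerset ∧ x = 𝒮.sup (atm g u) := by
  classical
  refine genBA_le
    (S := {x | ∃ 𝒮 : Finset (Finset ℕ), 𝒮 ⊆ u.powerset ∧ x = 𝒮.sup (atm g u)}) ?_ ?_ hx
  · refine ⟨⟨∅, by simp, by simp⟩, ⟨u.powerset, le_rfl, (atm_partition g u).symm⟩, ?_, ?_, ?_⟩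
    · rintro a ⟨𝒮, h𝒮, rfl⟩ b ⟨𝒯, h𝒯, rfl⟩
      refine ⟨𝒮 ∩ 𝒯, (Finset.inter_subset_left).trans h𝒮, ?_⟩
      rw [atm_sup_inf_sup g h𝒮 h𝒯]
    · rintro a ⟨𝒮, h𝒮, rfl⟩ b ⟨𝒯, h𝒯, rfl⟩
      exact ⟨𝒮 ∪ 𝒯, Finset.union_subset h𝒮 h𝒯, (Finset.sup_union).symm⟩
    · rintro a ⟨𝒮, h𝒮, rfl⟩
      exact ⟨u.powerset \ 𝒮, Finset.sdiff_subset, atm_sup_compl g h𝒮⟩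
  · intro z hz
    simp only [Finset.coe_image, Set.mem_image, Finset.mem_coe] at hz
    obtain ⟨i, hi, rfl⟩ := hz
    exact ⟨u.powerset.filter (fun S => i ∈ S), Finset.filter_subset _ _,
      (atm_recover g hi).symm⟩

end Atoms

section Constr
variable {B : Type*} [BooleanAlgebra B]

/-- signed element -/
def sgn (s : Bool) (x : B) : B := if s then x else xᶜ

@[simp] lemma sgn_true (x : B) : sgn true x = x := rfl
@[simp] lemma sgn_false (x : B) : sgn false x = xᶜ := rfl

lemma sgn_mem_genBA {X : Set B} (s : Bool) {y : B} (hy : y ∈ genBA X) : sgn s y ∈ genBA X := by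
  cases s
  · exact compl_mem_genBA hy
  · exact hy

lemma inf_compl_of_inf_eq {a v c : B} (h : a ⊓ v = a ⊓ c) : a ⊓ vᶜ = a ⊓ cᶜ := by
  have key : ∀ w : B, a ⊓ (a ⊓ w)ᶜ = a ⊓ wᶜ := by
    intro w
    rw [compl_inf, inf_sup_left, inf_compl_eq_bot, bot_sup_eq]
  rw [← key v, h, key c]

lemma inf_sgn_of_inf_eq {a v c : B} (s : Bool) (h : a ⊓ v = a ⊓ c) :
    a ⊓ sgn s v = a ⊓ sgn s c := by
  cases s
  · exact inf_compl_of_inf_eq h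
  · exact h

lemma inf_finsetInf_congr {a : B} {J : Finset ℕ} {f h : ℕ → B}
    (hfh : ∀ j ∈ J, a ⊓ f j = a ⊓ h j) : a ⊓ J.inf f = a ⊓ J.inf h := by
  classical
  induction J using Finset.induction_on with
  | empty => simp
  | insert j J hni ih =>
    rw [Finset.inf_insert, Finset.inf_insert, inf_inf_distrib_left,
      inf_inf_distrib_left a (h j), hfh j (Finset.mem_insert_self j J),
      ih fun j' hj' => hfh j' (Finset.mem_insert_of_mem hj')]

/-- length of the `i`-th codeword in the canonical complete prefix code with `m` leaves -/
def lenC (m i : ℕ) : ℕ := min (i + 1) (m - 1)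

lemma lenC_ge {m i : ℕ} (hi : i < m) : i ≤ lenC m i := by
  have : i ≤ m - 1 := Nat.le_sub_one_of_lt hi
  simp [lenC]; omega

/-- the element read at position `j ≥ 1` of the recoded stream on piece `i` of `m`:
`⊤`/`⊥` within the codeword, and a high generator beyond it. -/
def cBit (g : ℕ → B) (nn m i j : ℕ) : B :=
  if j ≤ i then ⊤ else if j ≤ lenC m i then ⊥ else g (nn + j - lenC m i - 1)

lemma cBit_of_le (g : ℕ → B) (nn m : ℕ) {i j : ℕ} (h : j ≤ i) : cBit g nn m i j = ⊤ := by
  simp [cBit, h]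

lemma cBit_of_mid (g : ℕ → B) (nn m : ℕ) {i j : ℕ} (h1 : ¬ j ≤ i) (h2 : j ≤ lenC m i) :
    cBit g nn m i j = ⊥ := by
  simp [cBit, h1, h2]

lemma cBit_of_high (g : ℕ → B) (nn : ℕ) {m i j : ℕ} (hi : i < m) (h2 : ¬ j ≤ lenC m i) :
    cBit g nn m i j = g (nn + j - lenC m i - 1) := by
  have h1 : ¬ j ≤ i := fun h => h2 (h.trans (lenC_ge hi))
  simp [cBit, h1, h2]

/-- good decoding index for the independence argument -/
lemma exists_goodIdx (m : ℕ) (hm : 1 ≤ m) (Jn : Finset ℕ) :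
    ∃ i, i < m ∧ (∀ j, 1 ≤ j → j ≤ i → j ∉ Jn) ∧ (i < m - 1 → i + 1 ∈ Jn) := by
  classical
  set P := Jn.filter (fun j => 1 ≤ j ∧ j ≤ m - 1) with hP
  by_cases h : P.Nonempty
  · set j₀ := P.min' h with hj₀
    have hj₀P : j₀ ∈ P := P.min'_mem h
    rw [hP, Finset.mem_filter] at hj₀P
    refine ⟨j₀ - 1, by omega, ?_, ?_⟩
    · intro j hj1 hj2 hjJn
      have hjP : j ∈ P := by
        rw [hP, Finset.mem_filter]
        exact ⟨hjJn, hj1, by omega⟩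
      have := Finset.min'_le P j hjP
      omega
    · intro _
      have : j₀ - 1 + 1 = j₀ := by omega
      rw [this]
      exact hj₀P.1
  · refine ⟨m - 1, by omega, ?_, by omega⟩
    intro j hj1 hj2 hjJn
    exact h ⟨j, by rw [hP, Finset.mem_filter]; exact ⟨hjJn, hj1, hj2⟩⟩

/-- on a good index, the signed code bits within the codeword are all `⊤`. -/
lemma sgn_cBit_goodIdx (g : ℕ → B) (nn m : ℕ) {i : ℕ} (him : i < m) {Jn : Finset ℕ}
    (hgood1 : ∀ j, 1 ≤ j → j ≤ i → j ∉ Jn) (hgood2 : i < m - 1 → i + 1 ∈ Jn)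
    {j : ℕ} (hj1 : 1 ≤ j) (hjlen : j ≤ lenC m i) {β : ℕ → Bool}
    (hβ : ∀ j', β j' = decide (j' ∉ Jn)) :
    sgn (β j) (cBit g nn m i j) = ⊤ := by
  by_cases hji : j ≤ i
  · have : β j = true := by rw [hβ]; simp [hgood1 j hj1 hji]
    rw [this, cBit_of_le g nn m hji, sgn_true]
  · have hji' : j = i + 1 := by
      have := lenC_ge him
      simp only [lenC] at hjlen
      omega
    have him' : i < m - 1 := by
      simp only [lenC] at hjlen
      omega
    have : β j = false := by rw [hβ]; simp [hji' ▸ hgood2 him']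
    rw [this, cBit_of_mid g nn m hji hjlen, sgn_false, compl_bot]

end Constr

section Constr2
variable {B : Type*} [BooleanAlgebra B]

/-- the `j`-th new generator (`j ≥ 1`), glued from the pieces. -/
def Fgen (g : ℕ → B) (nn kl : ℕ) (D : ℕ → Finset ℕ) (M off : ℕ → ℕ) (j : ℕ) : B :=
  (Finset.range kl).sup
    (fun i => atm g (Finset.range nn) (D i) ⊓ cBit g nn (M i) (off i) j)

variable (g : ℕ → B) (nn kl : ℕ) (D : ℕ → Finset ℕ) (M off : ℕ → ℕ)

lemma atm_inf_Fgen (hD : ∀ i < kl, D i ∈ (Finset.range nn).powerset)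
    (hDinj : ∀ i < kl, ∀ i' < kl, D i = D i' → i = i') {i : ℕ} (hi : i < kl) (j : ℕ) :
    atm g (Finset.range nn) (D i) ⊓ Fgen g nn kl D M off j
      = atm g (Finset.range nn) (D i) ⊓ cBit g nn (M i) (off i) j := by
  rw [Fgen, Finset.sup_inf_distrib_left]
  apply le_antisymm
  · refine Finset.sup_le fun i' hi' => ?_
    rw [Finset.mem_range] at hi'
    by_cases h : i' = i
    · subst h
      exact le_of_eq (by rw [← inf_assoc, inf_idem])
    · have hdisj : atm g (Finset.range nn) (D i) ⊓ atm g (Finset.range nn) (D i') = ⊥ :=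
        atm_disjoint g (hD i hi) (hD i' hi') (fun he => h (hDinj i' hi' i hi he.symm))
      have h2 : atm g (Finset.range nn) (D i)
            ⊓ (atm g (Finset.range nn) (D i') ⊓ cBit g nn (M i') (off i') j)
          ≤ atm g (Finset.range nn) (D i) ⊓ atm g (Finset.range nn) (D i') :=
        inf_le_inf le_rfl inf_le_left
      exact le_trans h2 (by rw [hdisj]; exact bot_le)
  · have he : atm g (Finset.range nn) (D i) ⊓ cBit g nn (M i) (off i) j
        = atm g (Finset.range nn) (D i)
            ⊓ (atm g (Finset.range nn) (D i) ⊓ cBit g nn (M i) (off i) j) := by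
      rw [← inf_assoc, inf_idem]
    rw [he]
    exact Finset.le_sup (f := fun i' => atm g (Finset.range nn) (D i)
      ⊓ (atm g (Finset.range nn) (D i') ⊓ cBit g nn (M i') (off i') j))
      (Finset.mem_range.2 hi)

lemma atm_inf_sgn_Fgen (hD : ∀ i < kl, D i ∈ (Finset.range nn).powerset)
    (hDinj : ∀ i < kl, ∀ i' < kl, D i = D i' → i = i') {i : ℕ} (hi : i < kl) (j : ℕ)
    (s : Bool) :
    atm g (Finset.range nn) (D i) ⊓ sgn s (Fgen g nn kl D M off j)
      = atm g (Finset.range nn) (D i) ⊓ sgn s (cBit g nn (M i) (off i) j) :=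
  inf_sgn_of_inf_eq s (atm_inf_Fgen g nn kl D M off hD hDinj hi j)

lemma atm_inf_infFgen (hD : ∀ i < kl, D i ∈ (Finset.range nn).powerset)
    (hDinj : ∀ i < kl, ∀ i' < kl, D i = D i' → i = i') {i : ℕ} (hi : i < kl)
    (J : Finset ℕ) (β : ℕ → Bool) :
    atm g (Finset.range nn) (D i) ⊓ J.inf (fun j => sgn (β j) (Fgen g nn kl D M off j))
      = atm g (Finset.range nn) (D i)
          ⊓ J.inf (fun j => sgn (β j) (cBit g nn (M i) (off i) j)) :=
  inf_finsetInf_congr fun j _ => atm_inf_sgn_Fgen g nn kl D M off hD hDinj hi j (β j)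

lemma sup_comp_enum {𝒮 : Finset (Finset ℕ)} {m : ℕ} {E : ℕ → Finset ℕ}
    (hmem : ∀ i < m, E i ∈ 𝒮) (hsurj : ∀ S ∈ 𝒮, ∃ i, i < m ∧ E i = S) (f : Finset ℕ → B) :
    (Finset.range m).sup (fun i => f (E i)) = 𝒮.sup f := by
  apply le_antisymm
  · refine Finset.sup_le fun i hi => ?_
    exact Finset.le_sup (hmem i (Finset.mem_range.1 hi))
  · refine Finset.sup_le fun S hS => ?_
    obtain ⟨i, hi, rfl⟩ := hsurj S hS
    exact Finset.le_sup (f := fun i => f (E i)) (Finset.mem_range.2 hi)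

/-- the signed code bits of piece `d` along its own codeword are all `⊤`. -/
lemma inf_sgn_cBit_self {m d : ℕ} (hd : d < m) :
    (Finset.Icc 1 (lenC m d)).inf (fun j => sgn (decide (j ≤ d)) (cBit g nn m d j)) = ⊤ := by
  rw [Finset.inf_eq_top_iff]
  intro j hj
  rw [Finset.mem_Icc] at hj
  by_cases hjd : j ≤ d
  · rw [cBit_of_le g nn m hjd]
    simp [hjd]
  · rw [cBit_of_mid g nn m hjd hj.2]
    simp [hjd]

/-- recovery of the atoms from the new generators. -/
lemma recover_atom (hD : ∀ i < kl, D i ∈ (Finset.range nn).powerset)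
    (hDinj : ∀ i < kl, ∀ i' < kl, D i = D i' → i = i')
    {lo m : ℕ} (hlm : lo + m ≤ kl) (hM : ∀ d < m, M (lo + d) = m ∧ off (lo + d) = d)
    {d : ℕ} (hd : d < m) :
    ((Finset.range m).sup (fun d' => atm g (Finset.range nn) (D (lo + d'))))
        ⊓ (Finset.Icc 1 (lenC m d)).inf
            (fun j => sgn (decide (j ≤ d)) (Fgen g nn kl D M off j))
      = atm g (Finset.range nn) (D (lo + d)) := by
  have hterm : ∀ d' < m,
      atm g (Finset.range nn) (D (lo + d'))
          ⊓ (Finset.Icc 1 (lenC m d)).inf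
              (fun j => sgn (decide (j ≤ d)) (Fgen g nn kl D M off j))
        = atm g (Finset.range nn) (D (lo + d'))
            ⊓ (Finset.Icc 1 (lenC m d)).inf
                (fun j => sgn (decide (j ≤ d)) (cBit g nn m d' j)) := by
    intro d' hd'
    have := atm_inf_infFgen g nn kl D M off hD hDinj
      (i := lo + d') (by omega) (Finset.Icc 1 (lenC m d)) (fun j => decide (j ≤ d))
    rwa [(hM d' hd').1, (hM d' hd').2] at this
  have hself : atm g (Finset.range nn) (D (lo + d))
      ⊓ (Finset.Icc 1 (lenC m d)).inf
          (fun j => sgn (decide (j ≤ d)) (Fgen g nn kl D M off j))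
      = atm g (Finset.range nn) (D (lo + d)) := by
    rw [hterm d hd, inf_sgn_cBit_self g nn hd, inf_top_eq]
  rw [Finset.sup_inf_distrib_right]
  apply le_antisymm
  · refine Finset.sup_le fun d' hd' => ?_
    rw [Finset.mem_range] at hd'
    by_cases h : d' = d
    · subst h
      exact le_of_eq hself
    · rw [hterm d' hd']
      -- find a killing coordinate j*
      have hkill : ∃ j ∈ Finset.Icc 1 (lenC m d),
          sgn (decide (j ≤ d)) (cBit g nn m d' j) = ⊥ := by
        rcases Nat.lt_or_ge d' d with hlt | hge
        · refine ⟨d' + 1, ?_, ?_⟩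
          · rw [Finset.mem_Icc]
            exact ⟨by omega, le_trans (by omega) (lenC_ge hd)⟩
          · have hmid : cBit g nn m d' (d' + 1) = ⊥ := by
              refine cBit_of_mid g nn m (by omega) ?_
              simp only [lenC]
              omega
            rw [hmid]
            have : decide (d' + 1 ≤ d) = true := by simp; omega
            rw [this, sgn_true]
        · have hgt : d < d' := by omega
          refine ⟨d + 1, ?_, ?_⟩
          · rw [Finset.mem_Icc]
            refine ⟨by omega, ?_⟩
            simp only [lenC]
            omega
          · have htop : cBit g nn m d' (d + 1) = ⊤ := cBit_of_le g nn m (by omega)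
            rw [htop]
            have : decide (d + 1 ≤ d) = false := by simp
            rw [this, sgn_false, compl_top]
      obtain ⟨j, hjmem, hj⟩ := hkill
      calc atm g (Finset.range nn) (D (lo + d'))
            ⊓ (Finset.Icc 1 (lenC m d)).inf (fun j => sgn (decide (j ≤ d)) (cBit g nn m d' j))
          ≤ (Finset.Icc 1 (lenC m d)).inf (fun j => sgn (decide (j ≤ d)) (cBit g nn m d' j)) :=
            inf_le_right
        _ ≤ sgn (decide (j ≤ d)) (cBit g nn m d' j) := Finset.inf_le hjmem
        _ ≤ atm g (Finset.range nn) (D (lo + d)) := by rw [hj]; exact bot_le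
  · calc atm g (Finset.range nn) (D (lo + d))
        = atm g (Finset.range nn) (D (lo + d))
            ⊓ (Finset.Icc 1 (lenC m d)).inf
                (fun j => sgn (decide (j ≤ d)) (Fgen g nn kl D M off j)) := hself.symm
      _ ≤ _ := Finset.le_sup
          (f := fun d' => atm g (Finset.range nn) (D (lo + d'))
            ⊓ (Finset.Icc 1 (lenC m d)).inf
                (fun j => sgn (decide (j ≤ d)) (Fgen g nn kl D M off j)))
          (Finset.mem_range.2 hd)

/-- recovery of the high generators. -/
lemma recover_high (hD : ∀ i < kl, D i ∈ (Finset.range nn).powerset)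
    (hDinj : ∀ i < kl, ∀ i' < kl, D i = D i' → i = i')
    (hMoff : ∀ i < kl, off i < M i)
    (hcover : (Finset.range kl).sup (fun i => atm g (Finset.range nn) (D i)) = ⊤) (r : ℕ) :
    (Finset.range kl).sup (fun i => atm g (Finset.range nn) (D i)
        ⊓ Fgen g nn kl D M off (lenC (M i) (off i) + 1 + r))
      = g (nn + r) := by
  have hterm : ∀ i ∈ Finset.range kl,
      atm g (Finset.range nn) (D i) ⊓ Fgen g nn kl D M off (lenC (M i) (off i) + 1 + r)
        = atm g (Finset.range nn) (D i) ⊓ g (nn + r) := by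
    intro i hi
    rw [Finset.mem_range] at hi
    rw [atm_inf_Fgen g nn kl D M off hD hDinj hi,
      cBit_of_high g nn (hMoff i hi) (by omega)]
    congr 2
    omega
  rw [Finset.sup_congr rfl hterm, ← Finset.sup_inf_distrib_right, hcover, top_inf_eq]

/-- key step for independence: on a good piece, the signed meet of the new generators
reduces to a signed meet of high generators. -/
lemma meet_reduce (hD : ∀ i < kl, D i ∈ (Finset.range nn).powerset)
    (hDinj : ∀ i < kl, ∀ i' < kl, D i = D i' → i = i')
    {lo m : ℕ} (hm : 1 ≤ m) (hlm : lo + m ≤ kl)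
    (hM : ∀ d < m, M (lo + d) = m ∧ off (lo + d) = d)
    (Jp Jn : Finset ℕ) (h1 : ∀ j ∈ Jp ∪ Jn, 1 ≤ j) :
    ∃ d, d < m ∧
      atm g (Finset.range nn) (D (lo + d))
          ⊓ (Jp ∪ Jn).inf (fun j => sgn (decide (j ∉ Jn)) (Fgen g nn kl D M off j))
        = atm g (Finset.range nn) (D (lo + d))
            ⊓ ((Jp ∪ Jn).filter (fun j => ¬ j ≤ lenC m d)).inf
                (fun j => sgn (decide (j ∉ Jn)) (g (nn + j - lenC m d - 1))) := by
  classical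
  obtain ⟨d, hd, hgood1, hgood2⟩ := exists_goodIdx m hm Jn
  refine ⟨d, hd, ?_⟩
  have step1 := atm_inf_infFgen g nn kl D M off hD hDinj
    (i := lo + d) (by omega) (Jp ∪ Jn) (fun j => decide (j ∉ Jn))
  rw [(hM d hd).1, (hM d hd).2] at step1
  rw [step1]
  have hsplit : Jp ∪ Jn = ((Jp ∪ Jn).filter (fun j => j ≤ lenC m d))
      ∪ ((Jp ∪ Jn).filter (fun j => ¬ j ≤ lenC m d)) :=
    (Finset.filter_union_filter_not_eq _ _).symm
  conv_lhs => rw [hsplit]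
  rw [Finset.inf_union]
  have hlow : ((Jp ∪ Jn).filter (fun j => j ≤ lenC m d)).inf
      (fun j => sgn (decide (j ∉ Jn)) (cBit g nn m d j)) = ⊤ := by
    rw [Finset.inf_eq_top_iff]
    intro j hj
    rw [Finset.mem_filter] at hj
    exact sgn_cBit_goodIdx g nn m hd hgood1 hgood2 (h1 j hj.1) hj.2 (fun _ => rfl)
  have hhigh : ((Jp ∪ Jn).filter (fun j => ¬ j ≤ lenC m d)).inf
      (fun j => sgn (decide (j ∉ Jn)) (cBit g nn m d j))
      = ((Jp ∪ Jn).filter (fun j => ¬ j ≤ lenC m d)).inf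
          (fun j => sgn (decide (j ∉ Jn)) (g (nn + j - lenC m d - 1))) := by
    refine Finset.inf_congr rfl fun j hj => ?_
    rw [Finset.mem_filter] at hj
    rw [cBit_of_high g nn hd hj.2]
  rw [hlow, top_inf_eq, hhigh]

end Constr2
section IndepBound
variable {B : Type*} [BooleanAlgebra B]

lemma indep_bound (J X I : Set B) (hind : IndepFrom J X I) (g : ℕ → B)
    (hginj : Function.Injective g) (hgJ : ∀ i, g i ∈ J) (nn : ℕ) (S : Finset ℕ)
    (H : Finset ℕ) (β : ℕ → Bool) (sh : ℕ → ℕ)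
    (hsh_inj : ∀ j ∈ H, ∀ j' ∈ H, sh j = sh j' → j = j')
    (hsh_big : ∀ j ∈ H, nn ≤ sh j)
    {a : B} (ha : a ∈ genBA X) (haI : a ∉ I) :
    atm g (Finset.range nn) S ⊓ H.inf (fun j => sgn (β j) (g (sh j))) ⊓ a ∉ I := by
  classical
  set lowP := (Finset.range nn).filter (fun i => i ∈ S) with hlowP
  set lowN := (Finset.range nn).filter (fun i => ¬ i ∈ S) with hlowN
  set hiP := H.filter (fun j => β j = true) with hhiP
  set hiN := H.filter (fun j => ¬ β j = true) with hhiN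
  set F₁ : Finset B := lowP.image g ∪ hiP.image (fun j => g (sh j)) with hF₁
  set F₂ : Finset B := lowN.image g ∪ hiN.image (fun j => g (sh j)) with hF₂
  have h₁sub : ↑F₁ ⊆ J := by
    intro z hz
    simp only [hF₁, Finset.coe_union, Set.mem_union, Finset.coe_image, Set.mem_image,
      Finset.mem_coe] at hz
    rcases hz with ⟨i, _, rfl⟩ | ⟨j, _, rfl⟩
    · exact hgJ i
    · exact hgJ (sh j)
  have h₂sub : ↑F₂ ⊆ J := by
    intro z hz
    simp only [hF₂, Finset.coe_union, Set.mem_union, Finset.coe_image, Set.mem_image,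
      Finset.mem_coe] at hz
    rcases hz with ⟨i, _, rfl⟩ | ⟨j, _, rfl⟩
    · exact hgJ i
    · exact hgJ (sh j)
  have hdisj : Disjoint F₁ F₂ := by
    rw [Finset.disjoint_left]
    intro z hz1 hz2
    simp only [hF₁, hF₂, Finset.mem_union, Finset.mem_image] at hz1 hz2
    rcases hz1 with ⟨i₁, hi₁, rfl⟩ | ⟨j₁, hj₁, hje₁⟩
    · rcases hz2 with ⟨i₂, hi₂, hie₂⟩ | ⟨j₂, hj₂, hje₂⟩
      · have : i₂ = i₁ := hginj hie₂
        subst this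
        rw [hlowP, Finset.mem_filter] at hi₁
        rw [hlowN, Finset.mem_filter] at hi₂
        exact hi₂.2 hi₁.2
      · have : sh j₂ = i₁ := hginj hje₂
        rw [hlowP, Finset.mem_filter, Finset.mem_range] at hi₁
        rw [hhiN, Finset.mem_filter] at hj₂
        have := hsh_big j₂ hj₂.1
        omega
    · rcases hz2 with ⟨i₂, hi₂, hie₂⟩ | ⟨j₂, hj₂, hje₂⟩
      · have : i₂ = sh j₁ := hginj (hje₁ ▸ hie₂)
        rw [hlowN, Finset.mem_filter, Finset.mem_range] at hi₂
        rw [hhiP, Finset.mem_filter] at hj₁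
        have := hsh_big j₁ hj₁.1
        omega
      · have hjj : sh j₂ = sh j₁ := hginj (hje₁ ▸ hje₂)
        rw [hhiP, Finset.mem_filter] at hj₁
        rw [hhiN, Finset.mem_filter] at hj₂
        have : j₂ = j₁ := hsh_inj j₂ hj₂.1 j₁ hj₁.1 hjj
        subst this
        exact hj₂.2 hj₁.2
  have einf1 : F₁.inf id = lowP.inf g ⊓ hiP.inf (fun j => g (sh j)) := by
    rw [hF₁, Finset.inf_union, Finset.inf_image, Finset.inf_image]
    rfl
  have einf2 : F₂.inf (fun y => yᶜ)
      = lowN.inf (fun i => (g i)ᶜ) ⊓ hiN.inf (fun j => (g (sh j))ᶜ) := by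
    rw [hF₂, Finset.inf_union, Finset.inf_image, Finset.inf_image]
    rfl
  have eatm : atm g (Finset.range nn) S = lowP.inf g ⊓ lowN.inf (fun i => (g i)ᶜ) := by
    rw [atm, ← Finset.filter_union_filter_not_eq (fun i => i ∈ S) (Finset.range nn),
      Finset.inf_union]
    congr 1
    · exact Finset.inf_congr rfl fun i hi => if_pos (Finset.mem_filter.1 hi).2
    · exact Finset.inf_congr rfl fun i hi => if_neg (Finset.mem_filter.1 hi).2
  have eH : H.inf (fun j => sgn (β j) (g (sh j)))
      = hiP.inf (fun j => g (sh j)) ⊓ hiN.inf (fun j => (g (sh j))ᶜ) := by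
    rw [← Finset.filter_union_filter_not_eq (fun j => β j = true) H, Finset.inf_union]
    congr 1
    · refine Finset.inf_congr rfl fun j hj => ?_
      rw [(Finset.mem_filter.1 hj).2, sgn_true]
    · refine Finset.inf_congr rfl fun j hj => ?_
      have := (Finset.mem_filter.1 hj).2
      rw [Bool.not_eq_true] at this
      rw [this, sgn_false]
  have hmain := hind F₁ F₂ h₁sub h₂sub hdisj a ha haI
  rw [einf1, einf2] at hmain
  rw [eatm, eH]
  rwa [inf_inf_inf_comm]

end IndepBound
/-- An element `b` that is independent from a subalgebra `B₁` modulo a proper ideal `I₂`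
and lies in the subalgebra generated by an independent set `J₁` together with `I₂` can be
incorporated into an independent set `J₁'` generating the same subalgebra with `I₂`. -/
theorem exists_indep_generating_set_containing {B₂ : Type*} [BooleanAlgebra B₂]
    [Countable B₂]
    (B1 : Set B₂) (hB1 : IsBooleanSubalgebra B1)
    (I₂ : Set B₂) (hI₂ : IsIdeal I₂) (hproper : (⊤ : B₂) ∉ I₂)
    (J₁ : Set B₂) (hJcount : J₁.Countable) (hJinf : J₁.Infinite)
    (hind : IndepFrom J₁ B1 I₂)
    (b : B₂) (hbind : IndepFrom {b} B1 I₂) (hbmem : b ∈ genBA (J₁ ∪ I₂)) :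
    ∃ J₁' : Set B₂, b ∈ J₁' ∧ IndepFrom J₁' B1 I₂ ∧
      genBA (J₁' ∪ I₂) = genBA (J₁ ∪ I₂) := by
  classical
  -- enumeration of J₁
  have hcount : Countable ↥J₁ := hJcount.to_subtype
  have hinfty : Infinite ↥J₁ := hJinf.to_subtype
  obtain ⟨denu⟩ := nonempty_denumerable ↥J₁
  set Eq1 : ℕ ≃ ↥J₁ := (Denumerable.eqv ↥J₁).symm with hEq1
  set e : ℕ → B₂ := fun i => ((Eq1 i : ↥J₁) : B₂) with he
  have he_inj : Function.Injective e := fun i j h => Eq1.injective (Subtype.ext h)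
  have he_mem : ∀ i, e i ∈ J₁ := fun i => (Eq1 i).2
  have he_surj : ∀ z ∈ J₁, ∃ i, e i = z := by
    intro z hz
    refine ⟨Eq1.symm ⟨z, hz⟩, ?_⟩
    rw [he]
    simp only [Equiv.apply_symm_apply]
  have hbot : (⊥ : B₂) ∈ I₂ := hI₂.bot_mem
  -- b and its complement are not in the ideal
  have hbI : b ∉ I₂ := by
    have := hbind {b} ∅ (by simp) (by simp) (by simp) ⊤ top_mem_genBA hproper
    simpa using this
  have hbcI : bᶜ ∉ I₂ := by
    have := hbind ∅ {b} (by simp) (by simp) (by simp) ⊤ top_mem_genBA hproper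
    simpa using this
  -- the ideal-free approximation x of b
  obtain ⟨x, hxgen, hbx⟩ := (mem_genBA_union_ideal hI₂).1 hbmem
  have hxI : x ∉ I₂ := hI₂.not_mem_of_symmDiff_mem hbx hbI
  have hxcI : xᶜ ∉ I₂ :=
    hI₂.not_mem_of_symmDiff_mem (by rw [compl_symmDiff_compl]; exact hbx) hbcI
  obtain ⟨Fx, hFxJ, hxF⟩ := exists_finset_of_mem_genBA hxgen
  -- a finite level n with x ∈ ⟨e 0, …, e (n-1)⟩
  set idx : B₂ → ℕ := fun z => if h : ∃ i, e i = z then h.choose else 0 with hidx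
  have hidx_spec : ∀ z ∈ J₁, e (idx z) = z := by
    intro z hz
    obtain ⟨i, hi⟩ := he_surj z hz
    rw [hidx]
    simp only
    rw [dif_pos ⟨i, hi⟩]
    exact (⟨i, hi⟩ : ∃ i, e i = z).choose_spec
  set n : ℕ := (Fx.image idx).sup id + 1 with hn
  have hFsub : Fx ⊆ (Finset.range n).image e := by
    intro z hz
    have h2 : idx z ≤ (Fx.image idx).sup id :=
      Finset.le_sup (f := id) (Finset.mem_image_of_mem idx hz)
    exact Finset.mem_image.2 ⟨idx z, Finset.mem_range.2 (by omega), hidx_spec z (hFxJ hz)⟩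
  have hxF' : x ∈ genBA (↑((Finset.range n).image e) : Set B₂) :=
    genBA_mono (by exact_mod_cast hFsub) hxF
  obtain ⟨𝒮, h𝒮, hxeq⟩ := exists_atoms_of_mem_genBA e hxF'
  set 𝒮c : Finset (Finset ℕ) := (Finset.range n).powerset \ 𝒮 with h𝒮cdef
  have h𝒮c : 𝒮c ⊆ (Finset.range n).powerset := Finset.sdiff_subset
  have hxc : xᶜ = 𝒮c.sup (atm e (Finset.range n)) := by
    rw [hxeq]; exact atm_sup_compl e h𝒮
  set k : ℕ := 𝒮.card with hkdef
  set l : ℕ := 𝒮c.card with hldef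
  have hk : 1 ≤ k := by
    rcases Finset.eq_empty_or_nonempty 𝒮 with h | h
    · exfalso; apply hxI; rw [hxeq, h, Finset.sup_empty]; exact hbot
    · rw [hkdef]; exact Finset.card_pos.2 h
  have hl : 1 ≤ l := by
    rcases Finset.eq_empty_or_nonempty 𝒮c with h | h
    · exfalso; apply hxcI; rw [hxc, h, Finset.sup_empty]; exact hbot
    · rw [hldef]; exact Finset.card_pos.2 h
  -- enumerations of 𝒮 and 𝒮c
  have enum_facts : ∀ 𝒯 : Finset (Finset ℕ),
      (∀ i < 𝒯.card, 𝒯.toList.getD i ∅ ∈ 𝒯) ∧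
      (∀ i < 𝒯.card, ∀ i' < 𝒯.card, 𝒯.toList.getD i ∅ = 𝒯.toList.getD i' ∅ → i = i') ∧
      (∀ S ∈ 𝒯, ∃ i, i < 𝒯.card ∧ 𝒯.toList.getD i ∅ = S) := by
    intro 𝒯
    have hlen : 𝒯.toList.length = 𝒯.card := Finset.length_toList 𝒯
    have hnd : 𝒯.toList.Nodup := Finset.nodup_toList 𝒯
    refine ⟨?_, ?_, ?_⟩
    · intro i hi
      rw [List.getD_eq_getElem _ _ (by omega)]
      rw [← Finset.mem_toList]
      exact List.getElem_mem _
    · intro i hi i' hi' hEq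
      rw [List.getD_eq_getElem _ _ (by omega), List.getD_eq_getElem _ _ (by omega)] at hEq
      exact (hnd.getElem_inj_iff).1 hEq
    · intro S hS
      rw [← Finset.mem_toList, List.mem_iff_getElem] at hS
      obtain ⟨i, hi, hget⟩ := hS
      exact ⟨i, by omega, by rw [List.getD_eq_getElem _ _ hi]; exact hget⟩
  set tE : ℕ → Finset ℕ := fun i => 𝒮.toList.getD i ∅ with htEdef
  set uE : ℕ → Finset ℕ := fun i => 𝒮c.toList.getD i ∅ with huEdef
  obtain ⟨htmem, htinj, htsurj⟩ := enum_facts 𝒮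
  obtain ⟨humem, huinj, husurj⟩ := enum_facts 𝒮c
  -- the unified list of pieces
  set D : ℕ → Finset ℕ := fun i => if i < k then tE i else uE (i - k) with hDdef
  set M : ℕ → ℕ := fun i => if i < k then k else l with hMdef
  set off : ℕ → ℕ := fun i => if i < k then i else i - k with hoffdef
  have hD : ∀ i < k + l, D i ∈ (Finset.range n).powerset := by
    intro i hi
    rw [hDdef]
    by_cases hik : i < k
    · simp only [if_pos hik]; exact h𝒮 (htmem i hik)
    · simp only [if_neg hik]; exact h𝒮c (humem (i - k) (by omega))
  have hDS : ∀ i < k + l, (i < k → D i ∈ 𝒮) ∧ (¬ i < k → D i ∈ 𝒮c) := by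
    intro i hi
    constructor
    · intro hik; rw [hDdef]; simp only [if_pos hik]; exact htmem i hik
    · intro hik; rw [hDdef]; simp only [if_neg hik]; exact humem (i - k) (by omega)
  have hDinj : ∀ i < k + l, ∀ i' < k + l, D i = D i' → i = i' := by
    intro i hi i' hi' hEq
    by_cases hik : i < k <;> by_cases hik' : i' < k
    · rw [hDdef] at hEq; simp only [if_pos hik, if_pos hik'] at hEq
      exact htinj i hik i' hik' hEq
    · exfalso
      have h1 := (hDS i hi).1 hik
      have h2 := (hDS i' hi').2 hik'
      rw [hEq] at h1
      rw [h𝒮cdef, Finset.mem_sdiff] at h2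
      exact h2.2 h1
    · exfalso
      have h1 := (hDS i hi).2 hik
      have h2 := (hDS i' hi').1 hik'
      rw [hEq] at h1
      rw [h𝒮cdef, Finset.mem_sdiff] at h1
      exact h1.2 h2
    · rw [hDdef] at hEq; simp only [if_neg hik, if_neg hik'] at hEq
      have := huinj (i - k) (by omega) (i' - k) (by omega) hEq
      omega
  have hMoff : ∀ i < k + l, off i < M i := by
    intro i hi
    rw [hMdef, hoffdef]
    by_cases hik : i < k
    · simp only [if_pos hik]; exact hik
    · simp only [if_neg hik]; omega
  have hMk : ∀ d < k, M (0 + d) = k ∧ off (0 + d) = d := by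
    intro d hd
    constructor
    · show M (0 + d) = k
      rw [hMdef]
      simp only [Nat.zero_add]
      rw [if_pos hd]
    · show off (0 + d) = d
      rw [hoffdef]
      simp only [Nat.zero_add]
      rw [if_pos hd]
  have hMl : ∀ d < l, M (k + d) = l ∧ off (k + d) = d := by
    intro d hd
    have hkd : ¬ k + d < k := by omega
    constructor
    · show M (k + d) = l
      rw [hMdef]
      simp only
      rw [if_neg hkd]
    · show off (k + d) = d
      rw [hoffdef]
      simp only
      rw [if_neg hkd]
      omega
  have hxD : x = (Finset.range k).sup (fun d => atm e (Finset.range n) (D (0 + d))) := by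
    rw [hxeq]
    refine (sup_comp_enum (𝒮 := 𝒮) (m := k) (E := fun d => D (0 + d)) ?_ ?_ _).symm
    · intro i hi
      rw [hDdef]; simp only [Nat.zero_add, if_pos hi]; exact htmem i hi
    · intro S hS
      obtain ⟨i, hi, hEq⟩ := htsurj S hS
      refine ⟨i, hi, ?_⟩
      rw [hDdef]; simp only [Nat.zero_add, if_pos hi]; exact (if_pos hi).trans hEq
  have hxcD : xᶜ = (Finset.range l).sup (fun d => atm e (Finset.range n) (D (k + d))) := by
    rw [hxc]
    refine (sup_comp_enum (𝒮 := 𝒮c) (m := l) (E := fun d => D (k + d)) ?_ ?_ _).symm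
    · intro i hi
      have : ¬ k + i < k := by omega
      rw [hDdef]; simp only [if_neg this]
      have : k + i - k = i := by omega
      rw [this]; exact humem i hi
    · intro S hS
      obtain ⟨i, hi, hEq⟩ := husurj S hS
      refine ⟨i, hi, ?_⟩
      have h2 : ¬ k + i < k := by omega
      rw [hDdef]; simp only [if_neg h2]
      have : k + i - k = i := by omega
      rw [this]; exact hEq
  have hcover : (Finset.range (k + l)).sup (fun i => atm e (Finset.range n) (D i)) = ⊤ := by
    rw [sup_comp_enum (𝒮 := (Finset.range n).powerset) (m := k + l) (E := D)
      (fun i hi => hD i hi) ?_ (atm e (Finset.range n))]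
    · exact atm_partition e (Finset.range n)
    · intro S hS
      by_cases hs : S ∈ 𝒮
      · obtain ⟨i, hi, hEq⟩ := htsurj S hs
        refine ⟨i, by omega, ?_⟩
        rw [hDdef]; simp only [if_pos hi]; exact (if_pos hi).trans hEq
      · have hsc : S ∈ 𝒮c := by rw [h𝒮cdef, Finset.mem_sdiff]; exact ⟨hS, hs⟩
        obtain ⟨i, hi, hEq⟩ := husurj S hsc
        refine ⟨k + i, by omega, ?_⟩
        have h2 : ¬ k + i < k := by omega
        rw [hDdef]; simp only [if_neg h2]
        have : k + i - k = i := by omega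
        rw [this]; exact hEq
  -- the new generating set
  set J' : Set B₂ := {b} ∪ (fun j => Fgen e n (k + l) D M off j) '' {j | 1 ≤ j} with hJ'def
  have hFJ' : ∀ j, 1 ≤ j → Fgen e n (k + l) D M off j ∈ J' := by
    intro j hj
    rw [hJ'def]
    exact Or.inr ⟨j, hj, rfl⟩
  have hbJ' : b ∈ J' := by rw [hJ'def]; exact Or.inl rfl
  -- membership facts
  have hatm_memJ : ∀ S : Finset ℕ, atm e (Finset.range n) S ∈ genBA J₁ := by
    intro S
    refine finsetInf_mem_genBA _ _ fun i _ => ?_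
    by_cases hiS : i ∈ S
    · rw [if_pos hiS]; exact subset_genBA_s8 (he_mem i)
    · rw [if_neg hiS]; exact compl_mem_genBA (subset_genBA_s8 (he_mem i))
  have hcBit_memJ : ∀ m i j, cBit e n m i j ∈ genBA J₁ := by
    intro m i j
    rw [cBit]
    by_cases h1 : j ≤ i
    · rw [if_pos h1]; exact top_mem_genBA
    · rw [if_neg h1]
      by_cases h2 : j ≤ lenC m i
      · rw [if_pos h2]; exact bot_mem_genBA
      · rw [if_neg h2]; exact subset_genBA_s8 (he_mem _)
  have hF_memJ : ∀ j, Fgen e n (k + l) D M off j ∈ genBA J₁ := by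
    intro j
    rw [Fgen]
    exact finsetSup_mem_genBA _ _ fun i _ => inf_mem_genBA (hatm_memJ _) (hcBit_memJ _ _ _)
  -- the key independence estimate
  have key : ∀ (ε : Bool) (Jp Jn : Finset ℕ), Disjoint Jp Jn → (∀ j ∈ Jp ∪ Jn, 1 ≤ j) →
      ∀ a ∈ genBA B1, a ∉ I₂ →
      sgn ε b ⊓ (Jp ∪ Jn).inf (fun j => sgn (decide (j ∉ Jn))
        (Fgen e n (k + l) D M off j)) ⊓ a ∉ I₂ := by
    intro ε Jp Jn hdisjpn h1 a ha haI
    -- choose side parameters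
    obtain ⟨lo, m, hm, hlm, hMside, hxside, hsd⟩ :
        ∃ lo m, 1 ≤ m ∧ lo + m ≤ k + l ∧ (∀ d < m, M (lo + d) = m ∧ off (lo + d) = d) ∧
          sgn ε x = (Finset.range m).sup (fun d => atm e (Finset.range n) (D (lo + d))) ∧
          sgn ε b ∆ sgn ε x ∈ I₂ := by
      cases ε
      · exact ⟨k, l, hl, le_rfl, hMl, by rw [sgn_false]; exact hxcD, by
          rw [sgn_false, sgn_false, compl_symmDiff_compl]; exact hbx⟩
      · exact ⟨0, k, hk, by omega, hMk, by rw [sgn_true]; exact hxD, by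
          rw [sgn_true, sgn_true]; exact hbx⟩
    obtain ⟨d, hd, hred⟩ := meet_reduce e n (k + l) D M off hD hDinj hm hlm hMside Jp Jn h1
    set H : Finset ℕ := (Jp ∪ Jn).filter (fun j => ¬ j ≤ lenC m d) with hHdef
    have hbound := indep_bound J₁ B1 I₂ hind e he_inj he_mem n (D (lo + d)) H
      (fun j => decide (j ∉ Jn)) (fun j => n + j - lenC m d - 1) ?_ ?_ ha haI
    · -- x-level statement
      have hxlev : atm e (Finset.range n) (D (lo + d))
          ⊓ (Jp ∪ Jn).inf (fun j => sgn (decide (j ∉ Jn)) (Fgen e n (k + l) D M off j))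
          ⊓ a ∉ I₂ := by
        rw [hred]; exact hbound
      have hatm_le : atm e (Finset.range n) (D (lo + d)) ≤ sgn ε x := by
        rw [hxside]
        exact Finset.le_sup (f := fun d' => atm e (Finset.range n) (D (lo + d')))
          (Finset.mem_range.2 hd)
      have hxver : sgn ε x
          ⊓ (Jp ∪ Jn).inf (fun j => sgn (decide (j ∉ Jn)) (Fgen e n (k + l) D M off j))
          ⊓ a ∉ I₂ := by
        intro hmem
        exact hxlev (hI₂.2.1 _ _ (inf_le_inf (inf_le_inf hatm_le le_rfl) le_rfl) hmem)
      intro hmem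
      apply hxver
      apply hI₂.mem_of_symmDiff_mem (u := sgn ε b
        ⊓ (Jp ∪ Jn).inf (fun j => sgn (decide (j ∉ Jn)) (Fgen e n (k + l) D M off j)) ⊓ a)
        ?_ hmem
      rw [← inf_symmDiff_distrib_right, ← inf_symmDiff_distrib_right]
      exact hI₂.2.1 _ _ (le_trans inf_le_left inf_le_left) hsd
    · -- injectivity of the shift
      intro j hj j' hj' hEq
      rw [hHdef, Finset.mem_filter] at hj hj'
      have h2 := hj.2
      have h2' := hj'.2
      omega
    · -- the shift lands above n
      intro j hj
      rw [hHdef, Finset.mem_filter] at hj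
      have h2 := hj.2
      omega
  -- independence of J'
  have hindep : IndepFrom J' B1 I₂ := by
    intro F₁ F₂ hF₁ hF₂ hdisj12 a ha haI
    set jdx : B₂ → ℕ := fun v =>
      if h : ∃ j, 1 ≤ j ∧ Fgen e n (k + l) D M off j = v then h.choose else 0 with hjdxdef
    have hjdx : ∀ v ∈ J', v ≠ b → 1 ≤ jdx v ∧ Fgen e n (k + l) D M off (jdx v) = v := by
      intro v hv hvb
      rw [hJ'def] at hv
      rcases hv with hv | ⟨j, hj, rfl⟩
      · exact absurd hv hvb
      · have hex : ∃ j', 1 ≤ j' ∧ Fgen e n (k + l) D M off j'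
            = Fgen e n (k + l) D M off j := ⟨j, hj, rfl⟩
        rw [hjdxdef]
        simp only
        rw [dif_pos hex]
        exact ⟨hex.choose_spec.1, hex.choose_spec.2⟩
    set Jp : Finset ℕ := (F₁.erase b).image jdx with hJpdef
    set Jn : Finset ℕ := (F₂.erase b).image jdx with hJndef
    have hmemJp : ∀ v ∈ F₁.erase b, v ∈ J' ∧ v ≠ b := by
      intro v hv
      rw [Finset.mem_erase] at hv
      exact ⟨hF₁ hv.2, hv.1⟩
    have hmemJn : ∀ v ∈ F₂.erase b, v ∈ J' ∧ v ≠ b := by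
      intro v hv
      rw [Finset.mem_erase] at hv
      exact ⟨hF₂ hv.2, hv.1⟩
    have h1 : ∀ j ∈ Jp ∪ Jn, 1 ≤ j := by
      intro j hj
      rw [Finset.mem_union] at hj
      rcases hj with hj | hj
      · rw [hJpdef] at hj
        obtain ⟨v, hv, rfl⟩ := Finset.mem_image.1 hj
        exact (hjdx v (hmemJp v hv).1 (hmemJp v hv).2).1
      · rw [hJndef] at hj
        obtain ⟨v, hv, rfl⟩ := Finset.mem_image.1 hj
        exact (hjdx v (hmemJn v hv).1 (hmemJn v hv).2).1
    have hdisjJ : Disjoint Jp Jn := by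
      rw [Finset.disjoint_left]
      intro j hjp hjn
      rw [hJpdef] at hjp
      rw [hJndef] at hjn
      obtain ⟨v₁, hv₁, hev₁⟩ := Finset.mem_image.1 hjp
      obtain ⟨v₂, hv₂, hev₂⟩ := Finset.mem_image.1 hjn
      have e₁ := (hjdx v₁ (hmemJp v₁ hv₁).1 (hmemJp v₁ hv₁).2).2
      have e₂ := (hjdx v₂ (hmemJn v₂ hv₂).1 (hmemJn v₂ hv₂).2).2
      rw [hev₁] at e₁
      rw [hev₂] at e₂
      have : v₁ = v₂ := by rw [← e₁, ← e₂]
      subst this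
      exact Finset.disjoint_left.1 hdisj12 (Finset.mem_of_mem_erase hv₁)
        (Finset.mem_of_mem_erase hv₂)
    have einfp : Jp.inf (Fgen e n (k + l) D M off) = (F₁.erase b).inf id := by
      rw [hJpdef, Finset.inf_image]
      refine Finset.inf_congr rfl fun v hv => ?_
      exact (hjdx v (hmemJp v hv).1 (hmemJp v hv).2).2
    have einfn : Jn.inf (fun j => (Fgen e n (k + l) D M off j)ᶜ)
        = (F₂.erase b).inf (fun y => yᶜ) := by
      rw [hJndef, Finset.inf_image]
      refine Finset.inf_congr rfl fun v hv => ?_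
      simp only [Function.comp_apply]
      rw [(hjdx v (hmemJn v hv).1 (hmemJn v hv).2).2]
    have esgn : (Jp ∪ Jn).inf (fun j => sgn (decide (j ∉ Jn)) (Fgen e n (k + l) D M off j))
        = Jp.inf (Fgen e n (k + l) D M off)
          ⊓ Jn.inf (fun j => (Fgen e n (k + l) D M off j)ᶜ) := by
      rw [Finset.inf_union]
      congr 1
      · refine Finset.inf_congr rfl fun j hj => ?_
        have : j ∉ Jn := Finset.disjoint_left.1 hdisjJ hj
        simp [this]
      · refine Finset.inf_congr rfl fun j hj => ?_
        simp [hj]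
    -- the three cases
    by_cases hb1 : b ∈ F₁
    · have hb2 : b ∉ F₂ := Finset.disjoint_left.1 hdisj12 hb1
      have hkey := key true Jp Jn hdisjJ h1 a ha haI
      rw [esgn, einfp, einfn, sgn_true, Finset.erase_eq_of_notMem hb2] at hkey
      have egoal : F₁.inf id ⊓ F₂.inf (fun y => yᶜ) ⊓ a
          = b ⊓ ((F₁.erase b).inf id ⊓ F₂.inf (fun y => yᶜ)) ⊓ a := by
        conv_lhs => rw [← Finset.insert_erase hb1]
        rw [Finset.inf_insert]
        congr 1
        rw [inf_assoc]
        rfl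
      rw [egoal]
      exact hkey
    · by_cases hb2 : b ∈ F₂
      · have hkey := key false Jp Jn hdisjJ h1 a ha haI
        rw [esgn, einfp, einfn, sgn_false, Finset.erase_eq_of_notMem hb1] at hkey
        have egoal : F₁.inf id ⊓ F₂.inf (fun y => yᶜ) ⊓ a
            = bᶜ ⊓ (F₁.inf id ⊓ (F₂.erase b).inf (fun y => yᶜ)) ⊓ a := by
          conv_lhs => rw [← Finset.insert_erase hb2]
          rw [Finset.inf_insert]
          congr 1
          rw [inf_left_comm]
        rw [egoal]
        exact hkey
      · have hkey := key true Jp Jn hdisjJ h1 a ha haI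
        rw [esgn, einfp, einfn, sgn_true, Finset.erase_eq_of_notMem hb1,
          Finset.erase_eq_of_notMem hb2] at hkey
        intro hmem
        apply hkey
        exact hI₂.2.1 _ _ (inf_le_inf inf_le_right le_rfl) hmem
  -- generation
  have hgen : genBA (J' ∪ I₂) = genBA (J₁ ∪ I₂) := by
    have hFmem12 : ∀ j, Fgen e n (k + l) D M off j ∈ genBA (J₁ ∪ I₂) :=
      fun j => genBA_mono Set.subset_union_left (hF_memJ j)
    have hbJ'gen : b ∈ genBA J' := subset_genBA_s8 hbJ'
    have hFJ'gen : ∀ j, 1 ≤ j → Fgen e n (k + l) D M off j ∈ genBA J' :=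
      fun j hj => subset_genBA_s8 (hFJ' j hj)
    -- atoms of the finite level belong to genBA (J' ∪ I₂)
    have hatm_in : ∀ i < k + l, atm e (Finset.range n) (D i) ∈ genBA (J' ∪ I₂) := by
      intro i hi
      obtain ⟨ε, lo, m, hm, hlm, hMside, hxside, hsd, d, hd, hlod⟩ :
          ∃ (ε : Bool) (lo m : ℕ), 1 ≤ m ∧ lo + m ≤ k + l ∧
            (∀ d < m, M (lo + d) = m ∧ off (lo + d) = d) ∧
            sgn ε x = (Finset.range m).sup (fun d => atm e (Finset.range n) (D (lo + d))) ∧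
            sgn ε b ∆ sgn ε x ∈ I₂ ∧ ∃ d, d < m ∧ lo + d = i := by
        by_cases hik : i < k
        · exact ⟨true, 0, k, hk, by omega, hMk, by rw [sgn_true]; exact hxD,
            by rw [sgn_true, sgn_true]; exact hbx, i, hik, by omega⟩
        · exact ⟨false, k, l, hl, le_rfl, hMl, by rw [sgn_false]; exact hxcD,
            by rw [sgn_false, sgn_false, compl_symmDiff_compl]; exact hbx,
            i - k, by omega, by omega⟩
      subst hlod
      set Z : B₂ := (Finset.Icc 1 (lenC m d)).inf
          (fun j => sgn (decide (j ≤ d)) (Fgen e n (k + l) D M off j)) with hZdef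
      have hrec := recover_atom e n (k + l) D M off hD hDinj hlm hMside hd
      rw [← hxside] at hrec
      have hZmem : Z ∈ genBA J' := by
        rw [hZdef]
        refine finsetInf_mem_genBA _ _ fun j hj => ?_
        exact sgn_mem_genBA _ (hFJ'gen j (Finset.mem_Icc.1 hj).1)
      have hymem : sgn ε b ⊓ Z ∈ genBA J' := inf_mem_genBA (sgn_mem_genBA ε hbJ'gen) hZmem
      refine (mem_genBA_union_ideal hI₂).2 ⟨sgn ε b ⊓ Z, hymem, ?_⟩
      rw [← hrec, symmDiff_comm, ← inf_symmDiff_distrib_right]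
      exact hI₂.2.1 _ _ inf_le_left hsd
    have hatmS_in : ∀ S ∈ (Finset.range n).powerset,
        atm e (Finset.range n) S ∈ genBA (J' ∪ I₂) := by
      intro S hS
      by_cases hs : S ∈ 𝒮
      · obtain ⟨i, hi, hEq⟩ := htsurj S hs
        have hDi : D i = S := by rw [hDdef]; simp only [if_pos hi]; exact (if_pos hi).trans hEq
        rw [← hDi]
        exact hatm_in i (by omega)
      · have hsc : S ∈ 𝒮c := by rw [h𝒮cdef, Finset.mem_sdiff]; exact ⟨hS, hs⟩
        obtain ⟨i, hi, hEq⟩ := husurj S hsc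
        have h2 : ¬ k + i < k := by omega
        have hDi : D (k + i) = S := by
          rw [hDdef]
          simp only [if_neg h2]
          have h3 : k + i - k = i := by omega
          rw [h3]
          exact hEq
        rw [← hDi]
        exact hatm_in (k + i) (by omega)
    have hlow_in : ∀ i < n, e i ∈ genBA (J' ∪ I₂) := by
      intro i hi
      rw [← atm_recover e (Finset.mem_range.2 hi)]
      refine finsetSup_mem_genBA _ _ fun S hS => ?_
      exact hatmS_in S ((Finset.filter_subset _ _) hS)
    have hhigh_in : ∀ r, e (n + r) ∈ genBA (J' ∪ I₂) := by
      intro r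
      rw [← recover_high e n (k + l) D M off hD hDinj hMoff hcover r]
      refine finsetSup_mem_genBA _ _ fun i hi => ?_
      refine inf_mem_genBA (hatm_in i (Finset.mem_range.1 hi)) ?_
      exact genBA_mono Set.subset_union_left (hFJ'gen _ (by omega))
    apply Set.Subset.antisymm
    · refine genBA_le (genBA_isSub _) ?_
      rintro z (hz | hz)
      · rw [hJ'def] at hz
        rcases hz with hz | ⟨j, _, rfl⟩
        · rw [Set.mem_singleton_iff] at hz
          subst hz
          exact hbmem
        · exact hFmem12 _
      · exact subset_genBA_s8 (Or.inr hz)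
    · refine genBA_le (genBA_isSub _) ?_
      rintro z (hz | hz)
      · obtain ⟨i, rfl⟩ := he_surj z hz
        rcases Nat.lt_or_ge i n with h | h
        · exact hlow_in i h
        · have hin : i = n + (i - n) := by omega
          rw [hin]
          exact hhigh_in (i - n)
      · exact subset_genBA_s8 (Or.inr hz)
  exact ⟨J', hbJ', hindep, hgen⟩
end
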